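/- arXiv:2109.11481 — 11 statements merged into one kernel-verified Lean document; each statement's English description precedes it below -/
import Mathlib

section
/- Let A : H → 2^H be a set-valued operator and M an admissible preconditioner for A such that M⁻¹A is M-monotone. Then the operator T := (M+A)⁻¹M is M-firmly nonexpansive: for all u₁, u₂ ∈ H, ‖T u₁ − T u₂‖_M² + ‖(I−T)u₁ − (I−T)u₂‖_M² ≤ ‖u₁ − u₂‖_M². -/
/-!
Write `a = T u₁ - T u₂` and `b = (I - T) u₁ - (I - T) u₂`, so that `u₁ - u₂ = a + b`. Since `M` is
self-adjoint, `‖a + b‖_M² = ‖a‖_M² + ‖b‖_M² + 2 ⟪M b, a⟫`, and the cross term is nonnegative by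
`M`-monotonicity of `M⁻¹A`, applied to the graph points `(T uᵢ, (I - T) uᵢ)`.
-/

open scoped InnerProductSpace

theorem LinearMap.IsSymmetric.inner_map_add_add {H : Type*} [NormedAddCommGroup H]
    [InnerProductSpace ℝ H] {M : H →ₗ[ℝ] H} (hM : M.IsSymmetric) (a b : H) :
    ⟪M (a + b), a + b⟫_ℝ = ⟪M a, a⟫_ℝ + ⟪M b, b⟫_ℝ + 2 * ⟪M b, a⟫_ℝ := by
  have hcross : ⟪M a, b⟫_ℝ = ⟪M b, a⟫_ℝ := by rw [hM, real_inner_comm]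
  rw [map_add, inner_add_left, inner_add_right, inner_add_right, hcross]
  ring

theorem LinearMap.IsSymmetric.inner_map_self_add_le {H : Type*} [NormedAddCommGroup H]
    [InnerProductSpace ℝ H] {M : H →ₗ[ℝ] H} (hM : M.IsSymmetric) {a b : H}
    (hab : 0 ≤ ⟪M b, a⟫_ℝ) :
    ⟪M a, a⟫_ℝ + ⟪M b, b⟫_ℝ ≤ ⟪M (a + b), a + b⟫_ℝ := by
  rw [hM.inner_map_add_add]
  linarith

theorem stmt2_general {H : Type} [NormedAddCommGroup H] [InnerProductSpace ℝ H]
    (A : Set (H × H)) (M : H →L[ℝ] H) (T : H → H)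
    (hMsa : ∀ x y : H, (inner ℝ (M x) y : ℝ) = inner ℝ x (M y))
    -- `T = (M+A)⁻¹ M` : for every `u`, `M u ∈ (M + A)(T u)` and `T` is single-valued
    (hT : ∀ u : H, (T u, M (u - T u)) ∈ A)
    -- `M⁻¹A` is `M`-monotone
    (hmono : ∀ u v u' v' : H, (u, M v) ∈ A → (u', M v') ∈ A →
        0 ≤ (inner ℝ (M (v - v')) (u - u') : ℝ)) :
    ∀ u₁ u₂ : H,
      (inner ℝ (M (T u₁ - T u₂)) (T u₁ - T u₂) : ℝ)
        + (inner ℝ (M ((u₁ - T u₁) - (u₂ - T u₂))) ((u₁ - T u₁) - (u₂ - T u₂)) : ℝ)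
      ≤ (inner ℝ (M (u₁ - u₂)) (u₁ - u₂) : ℝ) := by
  intro u₁ u₂
  have hsplit : u₁ - u₂ = (T u₁ - T u₂) + ((u₁ - T u₁) - (u₂ - T u₂)) := by abel
  have hM : (M : H →ₗ[ℝ] H).IsSymmetric := hMsa
  rw [hsplit]
  exact hM.inner_map_self_add_le (hmono _ _ _ _ (hT u₁) (hT u₂))

/-- If `M` is an admissible preconditioner for `A` and `M⁻¹A` is `M`-monotone, then
`T = (M+A)⁻¹M` is `M`-firmly nonexpansive. -/
theorem stmt2 {H : Type} [NormedAddCommGroup H] [InnerProductSpace ℝ H] [CompleteSpace H]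
    (A : Set (H × H)) (M : H →L[ℝ] H) (T : H → H)
    (hMsa : ∀ x y : H, (inner ℝ (M x) y : ℝ) = inner ℝ x (M y))
    (hMpos : ∀ x : H, 0 ≤ (inner ℝ (M x) x : ℝ))
    -- `T = (M+A)⁻¹ M` : for every `u`, `M u ∈ (M + A)(T u)` and `T` is single-valued
    (hT : ∀ u : H, (T u, M (u - T u)) ∈ A)
    (hTuniq : ∀ u v : H, (v, M (u - v)) ∈ A → v = T u)
    -- `M⁻¹A` is `M`-monotone
    (hmono : ∀ u v u' v' : H, (u, M v) ∈ A → (u', M v') ∈ A →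
        0 ≤ (inner ℝ (M (v - v')) (u - u') : ℝ)) :
    ∀ u₁ u₂ : H,
      (inner ℝ (M (T u₁ - T u₂)) (T u₁ - T u₂) : ℝ)
        + (inner ℝ (M ((u₁ - T u₁) - (u₂ - T u₂))) ((u₁ - T u₁) - (u₂ - T u₂)) : ℝ)
      ≤ (inner ℝ (M (u₁ - u₂)) (u₁ - u₂) : ℝ) :=
  stmt2_general A M T hMsa hT hmono
end

section
/- Let A : H → 2^H with zer A ≠ ∅ and M an admissible preconditioner such that M⁻¹A is M-monotone. Let T = (M+A)⁻¹M and let u^{k+1} = u^k + λ_k(T u^k − u^k) with λ_k ∈ [0,2] and Σ_k λ_k(2−λ_k) = +∞. Then {u^k} is M-Fejér monotone with respect to Fix T (‖u^{k+1} − u‖_M ≤ ‖u^k − u‖_M for all k and all u ∈ Fix T) and M-asymptotically regular (‖T u^k − u^k‖_M → 0). -/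
/-!
Monotonicity of `M⁻¹A` makes the resolvent `T = (M + A)⁻¹M` firmly nonexpansive for the
seminorm `‖·‖_M`. Expanding the square, one relaxed step with parameter `λ` then decreases
`‖u - v‖²_M` by at least `λ(2 - λ)‖Tu - u‖²_M` for every fixed point `v`, and does not increase
the residual `‖Tu - u‖_M`. A zero of `A` is a fixed point of `T`, so summing the first estimate
bounds `∑ λₖ(2 - λₖ)‖Tuₖ - uₖ‖²_M`; as the residuals are nonincreasing and `∑ λₖ(2 - λₖ)`
diverges, they tend to zero.
-/

open Filter Function
open scoped RealInnerProductSpace Topology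

lemma Finset.sum_range_le_sub_of_le_sub {a b : ℕ → ℝ} (h : ∀ k, a (k + 1) ≤ a k - b k)
    (n : ℕ) : ∑ k ∈ Finset.range n, b k ≤ a 0 - a n :=
  calc ∑ k ∈ Finset.range n, b k
      ≤ ∑ k ∈ Finset.range n, (a k - a (k + 1)) :=
        Finset.sum_le_sum fun k _ => by linarith [h k]
    _ = a 0 - a n := Finset.sum_range_sub' a n

lemma tendsto_zero_of_antitone_of_sum_mul_le {f w : ℕ → ℝ} {C : ℝ} (hf : Antitone f)
    (hf0 : ∀ n, 0 ≤ f n) (hw : ∀ n, 0 ≤ w n)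
    (hsum : ∀ n, ∑ k ∈ Finset.range n, w k * f k ≤ C)
    (hdiv : Tendsto (fun n => ∑ k ∈ Finset.range n, w k) atTop atTop) :
    Tendsto f atTop (𝓝 0) := by
  have hbound (n : ℕ) : f n * ∑ k ∈ Finset.range n, w k ≤ C :=
    calc f n * ∑ k ∈ Finset.range n, w k
        = ∑ k ∈ Finset.range n, w k * f n := by rw [Finset.mul_sum]; simp only [mul_comm]
      _ ≤ ∑ k ∈ Finset.range n, w k * f k := Finset.sum_le_sum fun k hk =>
          mul_le_mul_of_nonneg_left (hf (Finset.mem_range.1 hk).le) (hw k)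
      _ ≤ C := hsum n
  refine squeeze_zero' (Eventually.of_forall hf0)
    ((hdiv.eventually_gt_atTop 0).mono fun n hn => (le_div_iff₀ hn).2 (hbound n))
    (tendsto_const_nhds.div_atTop hdiv)

variable {H : Type*} [NormedAddCommGroup H] [InnerProductSpace ℝ H] {M : H →L[ℝ] H}

lemma LinearMap.IsSymmetric.inner_map_add_smul_self (hM : (M : H →ₗ[ℝ] H).IsSymmetric)
    (x y : H) (t : ℝ) :
    ⟪M (x + t • y), x + t • y⟫ = ⟪M x, x⟫ + 2 * t * ⟪M y, x⟫ + t ^ 2 * ⟪M y, y⟫ := by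
  have hxy : ⟪M x, y⟫ = ⟪M y, x⟫ := by rw [← real_inner_comm, hM.apply_clm]
  simp only [map_add, map_smul, inner_add_left, inner_add_right, real_inner_smul_left,
    real_inner_smul_right, hxy]
  ring

/-- Equivalent to `‖Tx - Ty‖²_M ≤ ⟪Tx - Ty, x - y⟫_M`. -/
def IsMFirmlyNonexpansive (M : H →L[ℝ] H) (T : H → H) : Prop :=
  ∀ x y, 0 ≤ ⟪M ((x - T x) - (y - T y)), T x - T y⟫

lemma isMFirmlyNonexpansive_of_mem {A : Set (H × H)} {T : H → H}
    (hT : ∀ x, (T x, M (x - T x)) ∈ A)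
    (hmono : ∀ u v u' v' : H, (u, M v) ∈ A → (u', M v') ∈ A → 0 ≤ ⟪M (v - v'), u - u'⟫) :
    IsMFirmlyNonexpansive M T :=
  fun x y => hmono _ _ _ _ (hT x) (hT y)

namespace IsMFirmlyNonexpansive

variable {T : H → H}

lemma inner_residual_le_of_isFixedPt (hF : IsMFirmlyNonexpansive M T) (x : H) {v : H}
    (hv : IsFixedPt T v) : ⟪M (T x - x), x - v⟫ ≤ -⟪M (T x - x), T x - x⟫ := by
  have h := hF x v
  rw [hv.eq, sub_self, sub_zero, ← neg_sub, map_neg, inner_neg_left,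
    show T x - v = (T x - x) + (x - v) by abel, inner_add_right] at h
  linarith

lemma inner_relaxed_sub_le (hF : IsMFirmlyNonexpansive M T)
    (hM : (M : H →ₗ[ℝ] H).IsSymmetric) (x : H) {v : H} (hv : IsFixedPt T v) {t : ℝ}
    (ht : 0 ≤ t) :
    ⟪M (x + t • (T x - x) - v), x + t • (T x - x) - v⟫
      ≤ ⟪M (x - v), x - v⟫ - t * (2 - t) * ⟪M (T x - x), T x - x⟫ := by
  rw [show x + t • (T x - x) - v = (x - v) + t • (T x - x) by abel,
    hM.inner_map_add_smul_self]
  linarith [mul_le_mul_of_nonneg_left (hF.inner_residual_le_of_isFixedPt x hv) ht]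

lemma inner_residual_relaxed_le (hF : IsMFirmlyNonexpansive M T) (hM : M.IsPositive)
    (x : H) {t : ℝ} (ht : t ∈ Set.Icc (0 : ℝ) 2) :
    ⟪M (T (x + t • (T x - x)) - (x + t • (T x - x))),
        T (x + t • (T x - x)) - (x + t • (T x - x))⟫
      ≤ ⟪M (T x - x), T x - x⟫ := by
  rcases ht.1.eq_or_lt with rfl | ht0
  · simp
  generalize hy : x + t • (T x - x) = y
  generalize ha : T x - x = a at hy
  generalize hb : T y - y = b
  -- `‖b‖²_M = ‖a‖²_M - 2⟪a - b, a⟫_M + ‖a - b‖²_M`, and firm nonexpansiveness between `y` and `x`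
  -- gives `‖a - b‖²_M ≤ t⟪a - b, a⟫_M` with `0 < t ≤ 2`.
  have hab : ⟪M (a - b), a - b⟫ ≤ t * ⟪M (a - b), a⟫ := by
    have h := hF y x
    rw [show y - T y - (x - T x) = a - b by subst ha hb; abel,
      show T y - T x = -(a - b) + t • a by subst ha hb hy; abel,
      inner_add_right, inner_neg_right, real_inner_smul_right] at h
    linarith
  have hexp := hM.isSymmetric.inner_map_add_smul_self a (a - b) (-1)
  rw [show a + (-1 : ℝ) • (a - b) = b by module] at hexp
  nlinarith [hM.inner_nonneg_left (a - b), ht.2]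

end IsMFirmlyNonexpansive

theorem stmt5_general {H : Type} [NormedAddCommGroup H] [InnerProductSpace ℝ H]
    (A : Set (H × H)) (M : H →L[ℝ] H) (T : H → H)
    (hMsa : ∀ x y : H, (inner ℝ (M x) y : ℝ) = inner ℝ x (M y))
    (hMpos : ∀ x : H, 0 ≤ (inner ℝ (M x) x : ℝ))
    -- admissibility: `T = (M+A)⁻¹ M`, single-valued with full domain
    (hT : ∀ u : H, (T u, M (u - T u)) ∈ A)
    (hTuniq : ∀ u v : H, (v, M (u - v)) ∈ A → v = T u)
    -- `M⁻¹A` is `M`-monotone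
    (hmono : ∀ u v u' v' : H, (u, M v) ∈ A → (u', M v') ∈ A →
        0 ≤ (inner ℝ (M (v - v')) (u - u') : ℝ))
    -- `zer A ≠ ∅`
    (hzer : ∃ x : H, (x, (0 : H)) ∈ A)
    (lam : ℕ → ℝ) (hlam : ∀ k, lam k ∈ Set.Icc (0 : ℝ) 2)
    (hdiv : Tendsto (fun n => ∑ k ∈ Finset.range n, lam k * (2 - lam k)) atTop atTop)
    (u : ℕ → H) (hiter : ∀ k, u (k + 1) = u k + lam k • (T (u k) - u k)) :
    (∀ k : ℕ, ∀ v : H, T v = v →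
        Real.sqrt (inner ℝ (M (u (k + 1) - v)) (u (k + 1) - v))
          ≤ Real.sqrt (inner ℝ (M (u k - v)) (u k - v))) ∧
    Tendsto (fun k => Real.sqrt (inner ℝ (M (T (u k) - u k)) (T (u k) - u k))) atTop (nhds 0) := by
  have hM : M.IsPositive := M.isPositive_iff.2 ⟨hMsa, hMpos⟩
  have hF : IsMFirmlyNonexpansive M T := isMFirmlyNonexpansive_of_mem hT hmono
  have hweight (k : ℕ) : 0 ≤ lam k * (2 - lam k) :=
    mul_nonneg (hlam k).1 (sub_nonneg.2 (hlam k).2)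
  have hstep (k : ℕ) {v : H} (hv : IsFixedPt T v) :
      ⟪M (u (k + 1) - v), u (k + 1) - v⟫ ≤ ⟪M (u k - v), u k - v⟫
        - lam k * (2 - lam k) * ⟪M (T (u k) - u k), T (u k) - u k⟫ :=
    hiter k ▸ hF.inner_relaxed_sub_le hM.isSymmetric (u k) hv (hlam k).1
  refine ⟨fun k v hv => Real.sqrt_le_sqrt ?_, ?_⟩
  · linarith [hstep k hv, mul_nonneg (hweight k) (hM.inner_nonneg_left (T (u k) - u k))]
  obtain ⟨z, hz⟩ := hzer
  have hzfix : IsFixedPt T z := (hTuniq z z (by simpa using hz)).symm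
  have hresidual : Tendsto (fun k => ⟪M (T (u k) - u k), T (u k) - u k⟫) atTop (𝓝 0) :=
    tendsto_zero_of_antitone_of_sum_mul_le
      (antitone_nat_of_succ_le fun k => hiter k ▸ hF.inner_residual_relaxed_le hM (u k) (hlam k))
      (fun k => hM.inner_nonneg_left _) hweight
      (fun n => (Finset.sum_range_le_sub_of_le_sub
        (a := fun k => ⟪M (u k - z), u k - z⟫) (fun k => hstep k hzfix) n).trans
        (sub_le_self _ (hM.inner_nonneg_left _)))
      hdiv
  simpa using hresidual.sqrt

/-- The PPP iterates are `M`-Fejér monotone w.r.t. `Fix T` and `M`-asymptotically regular. -/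
theorem stmt5 {H : Type} [NormedAddCommGroup H] [InnerProductSpace ℝ H] [CompleteSpace H]
    (A : Set (H × H)) (M : H →L[ℝ] H) (T : H → H)
    (hMsa : ∀ x y : H, (inner ℝ (M x) y : ℝ) = inner ℝ x (M y))
    (hMpos : ∀ x : H, 0 ≤ (inner ℝ (M x) x : ℝ))
    -- admissibility: `T = (M+A)⁻¹ M`, single-valued with full domain
    (hT : ∀ u : H, (T u, M (u - T u)) ∈ A)
    (hTuniq : ∀ u v : H, (v, M (u - v)) ∈ A → v = T u)
    -- `M⁻¹A` is `M`-monotone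
    (hmono : ∀ u v u' v' : H, (u, M v) ∈ A → (u', M v') ∈ A →
        0 ≤ (inner ℝ (M (v - v')) (u - u') : ℝ))
    -- `zer A ≠ ∅`
    (hzer : ∃ x : H, (x, (0 : H)) ∈ A)
    (lam : ℕ → ℝ) (hlam : ∀ k, lam k ∈ Set.Icc (0 : ℝ) 2)
    (hdiv : Tendsto (fun n => ∑ k ∈ Finset.range n, lam k * (2 - lam k)) atTop atTop)
    (u : ℕ → H) (hiter : ∀ k, u (k + 1) = u k + lam k • (T (u k) - u k)) :
    (∀ k : ℕ, ∀ v : H, T v = v →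
        Real.sqrt (inner ℝ (M (u (k + 1) - v)) (u (k + 1) - v))
          ≤ Real.sqrt (inner ℝ (M (u k - v)) (u k - v))) ∧
    Tendsto (fun k => Real.sqrt (inner ℝ (M (T (u k) - u k)) (T (u k) - u k))) atTop (nhds 0) :=
  stmt5_general A M T hMsa hMpos hT hTuniq hmono hzer lam hlam hdiv u hiter
end

section
/- Let A : H → 2^H be maximal monotone with zer A ≠ ∅ and M an admissible preconditioner such that (M+A)⁻¹ is L-Lipschitz. Then the sequence {T u^k} generated by the relaxed preconditioned proximal point iteration u^{k+1} = u^k + λ_k(T u^k − u^k), with λ_k ∈ [0,2] and Σ λ_k(2−λ_k) = +∞, converges weakly to a point u* ∈ Fix T, i.e., a zero of A. If moreover 0 < inf λ_k ≤ sup λ_k < 2, then {u^k} converges weakly to u*. -/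
/-!
In the seminorm `‖x‖_M² = ⟪M x, x⟫`, monotonicity of `A` makes the iteration Fejér monotone with
respect to every zero `z` of `A`,
`‖u^{k+1} - z‖_M² ≤ ‖u^k - z‖_M² - λ_k (2 - λ_k) ‖T u^k - u^k‖_M²`,
and the residual `‖T u^k - u^k‖_M` is nonincreasing, so `∑ λ_k (2 - λ_k) = ∞` forces
`M (u^k - T u^k) → 0`. The Lipschitz bound on `(M + A)⁻¹` turns the bounded `M`-distance to `z`
into a bound on `T u^k`. Weak cluster points of `T u^k` are zeros of `A`, since the graph of a
maximal monotone operator is weak–strong closed, and Opial's argument in the seminorm shows that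
two cluster points `p, q` satisfy `M (p - q) = 0`, whence `q = T p = p` because `T` is
single-valued. For `λ_k ∈ [ε, 2 - ε]`, `⟪u^k, v⟫` obeys a contracting recursion driven by the
convergent `⟪T u^k, v⟫`.
-/

open Filter Topology RealInnerProductSpace

section WeakConvergence

variable {H : Type*} [NormedAddCommGroup H] [InnerProductSpace ℝ H]

def WeakTendsto (x : ℕ → H) (p : H) : Prop :=
  ∀ v, Tendsto (fun k => ⟪x k, v⟫) atTop (𝓝 ⟪p, v⟫)

-- Sequential Banach–Alaoglu in the separable closed span of the sequence, then Riesz.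
theorem exists_strictMono_weakTendsto_of_bounded [CompleteSpace H] {x : ℕ → H} {C : ℝ}
    (hC : ∀ n, ‖x n‖ ≤ C) : ∃ (p : H) (φ : ℕ → ℕ), StrictMono φ ∧ WeakTendsto (x ∘ φ) p := by
  set K := (Submodule.span ℝ (Set.range x)).topologicalClosure
  have hxK (n : ℕ) : x n ∈ K :=
    Submodule.le_topologicalClosure _ (Submodule.subset_span (Set.mem_range_self n))
  have : TopologicalSpace.SeparableSpace K := by
    have : TopologicalSpace.IsSeparable (K : Set H) := by
      rw [Submodule.topologicalClosure_coe]
      exact (Set.countable_range x).isSeparable.span.closure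
    exact this.separableSpace
  let f (n : ℕ) : WeakDual ℝ K :=
    WeakDual.toStrongDual.symm (InnerProductSpace.toDual ℝ K ⟨x n, hxK n⟩)
  have hf (n : ℕ) : f n ∈ WeakDual.toStrongDual ⁻¹' Metric.closedBall 0 C := by
    rw [Set.mem_preimage, LinearEquiv.apply_symm_apply]
    exact (mem_closedBall_zero_iff (E := StrongDual ℝ K)).2 (by simpa using hC n)
  obtain ⟨F, -, φ, hφ, hF⟩ := WeakDual.isSeqCompact_closedBall ℝ K 0 C hf
  refine ⟨(InnerProductSpace.toDual ℝ K).symm (WeakDual.toStrongDual F), φ, hφ, fun v => ?_⟩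
  have := ((WeakDual.eval_continuous (K.orthogonalProjectionOnto v)).tendsto F).comp hF
  rw [← Submodule.inner_orthogonalProjectionOnto_eq_of_mem_left,
    InnerProductSpace.toDual_symm_apply]
  simpa [Function.comp_def, f] using this

theorem weakTendsto_of_forall_subseq [CompleteSpace H] {x : ℕ → H} {p : H} {C : ℝ}
    (hC : ∀ n, ‖x n‖ ≤ C)
    (h : ∀ φ : ℕ → ℕ, Tendsto φ atTop atTop → ∀ q, WeakTendsto (x ∘ φ) q → q = p) :
    WeakTendsto x p := fun v =>
  tendsto_of_subseq_tendsto fun ψ hψ => by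
    obtain ⟨q, φ, hφ, hq⟩ := exists_strictMono_weakTendsto_of_bounded fun n => hC (ψ n)
    obtain rfl := h (ψ ∘ φ) (hψ.comp hφ.tendsto_atTop) q hq
    exact ⟨φ, hq v⟩

end WeakConvergence

namespace ContinuousLinearMap.IsPositive

variable {H : Type*} [NormedAddCommGroup H] [InnerProductSpace ℝ H] {M : H →L[ℝ] H}

theorem inner_map_comm (hM : M.IsPositive) (x y : H) : ⟪M x, y⟫ = ⟪M y, x⟫ :=
  (hM.inner_left_eq_inner_right x y).trans (real_inner_comm _ _)

theorem inner_map_add_smul (hM : M.IsPositive) (x y : H) (c : ℝ) :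
    ⟪M (x + c • y), x + c • y⟫ = ⟪M x, x⟫ + 2 * c * ⟪M y, x⟫ + c ^ 2 * ⟪M y, y⟫ := by
  simp only [map_add, map_smul, inner_add_left, inner_add_right, real_inner_smul_left,
    real_inner_smul_right]
  linear_combination c * hM.inner_map_comm x y

theorem inner_map_sub (hM : M.IsPositive) (x y : H) :
    ⟪M (x - y), x - y⟫ = ⟪M x, x⟫ - 2 * ⟪M y, x⟫ + ⟪M y, y⟫ := by
  simpa [sub_eq_add_neg] using hM.inner_map_add_smul x y (-1)

theorem inner_sq_le (hM : M.IsPositive) (x y : H) : ⟪M x, y⟫ ^ 2 ≤ ⟪M x, x⟫ * ⟪M y, y⟫ := by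
  have hquad (t : ℝ) : 0 ≤ ⟪M y, y⟫ * (t * t) + 2 * ⟪M y, x⟫ * t + ⟪M x, x⟫ := by
    have := hM.inner_nonneg_left (x + t • y)
    rw [hM.inner_map_add_smul] at this
    linarith
  have := discrim_le_zero hquad
  rw [discrim, hM.inner_map_comm y x] at this
  linarith

theorem norm_sq_le (hM : M.IsPositive) (x : H) : ‖M x‖ ^ 2 ≤ ‖M‖ * ⟪M x, x⟫ := by
  have hcs := hM.inner_sq_le x (M x)
  have hMMx : ⟪M (M x), M x⟫ ≤ ‖M‖ * ‖M x‖ * ‖M x‖ :=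
    (real_inner_le_norm _ _).trans (by gcongr; exact M.le_opNorm _)
  rw [real_inner_self_eq_norm_sq] at hcs
  rcases (norm_nonneg (M x)).eq_or_lt with h0 | hpos
  · rw [← h0]; simpa using mul_nonneg (norm_nonneg M) (hM.inner_nonneg_left x)
  · nlinarith [hM.inner_nonneg_left x, mul_pos hpos hpos]

theorem norm_le_sqrt (hM : M.IsPositive) (x : H) : ‖M x‖ ≤ √(‖M‖ * ⟪M x, x⟫) :=
  Real.le_sqrt_of_sq_le (hM.norm_sq_le x)

theorem map_eq_zero_of_inner_eq_zero (hM : M.IsPositive) {x : H} (hx : ⟪M x, x⟫ = 0) :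
    M x = 0 := by
  simpa [hx] using hM.norm_sq_le x

end ContinuousLinearMap.IsPositive

section MonotoneOperator

variable {H : Type*} [NormedAddCommGroup H] [InnerProductSpace ℝ H]

def IsMonotoneOperator (A : Set (H × H)) : Prop :=
  ∀ p ∈ A, ∀ q ∈ A, 0 ≤ ⟪p.2 - q.2, p.1 - q.1⟫

theorem mem_of_weakTendsto_of_tendsto {A : Set (H × H)} (hA : IsMonotoneOperator A)
    (hmax : ∀ p : H × H, (∀ q ∈ A, 0 ≤ ⟪p.2 - q.2, p.1 - q.1⟫) → p ∈ A)
    {x y : ℕ → H} {a b : H} {C : ℝ} (hxy : ∀ n, (x n, y n) ∈ A) (hx : WeakTendsto x a)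
    (hxC : ∀ n, ‖x n‖ ≤ C) (hy : Tendsto y atTop (𝓝 b)) : (a, b) ∈ A := by
  refine hmax _ fun r hr => ge_of_tendsto (x := atTop) ?_
    (Eventually.of_forall fun n => hA _ (hxy n) r hr)
  have hsplit (n : ℕ) : ⟪y n - r.2, x n - r.1⟫
      = ⟪y n - b, x n - r.1⟫ + (⟪x n, b - r.2⟫ - ⟪r.1, b - r.2⟫) := by
    simp only [inner_sub_left, inner_sub_right]
    rw [real_inner_comm b (x n), real_inner_comm r.2 (x n), real_inner_comm b r.1,
      real_inner_comm r.2 r.1]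
    ring
  have hvanish : Tendsto (fun n => ⟪y n - b, x n - r.1⟫) atTop (𝓝 0) := by
    refine squeeze_zero_norm (fun n => (norm_inner_le_norm _ _).trans ?_)
      (((tendsto_sub_nhds_zero_iff.2 hy).norm.mul_const (C + ‖r.1‖)).trans_eq (by simp))
    exact mul_le_mul_of_nonneg_left ((norm_sub_le _ _).trans (by gcongr; exact hxC n))
      (norm_nonneg _)
  have hlim : ⟪b - r.2, a - r.1⟫ = 0 + (⟪a, b - r.2⟫ - ⟪r.1, b - r.2⟫) := by
    rw [zero_add, ← inner_sub_left, real_inner_comm]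
  rw [hlim]
  simpa only [hsplit] using hvanish.add ((hx (b - r.2)).sub_const ⟪r.1, b - r.2⟫)

end MonotoneOperator

section RealSequences

theorem tendsto_zero_of_antitone_of_sum_mul_le_s8 {b c : ℕ → ℝ} {B : ℝ} (hb : Antitone b)
    (hb0 : ∀ k, 0 ≤ b k) (hc0 : ∀ k, 0 ≤ c k)
    (hc : Tendsto (fun n => ∑ k ∈ Finset.range n, c k) atTop atTop)
    (hB : ∀ n, ∑ k ∈ Finset.range n, c k * b k ≤ B) : Tendsto b atTop (𝓝 0) := by
  have hbdd : BddBelow (Set.range b) := ⟨0, Set.forall_mem_range.2 hb0⟩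
  convert tendsto_atTop_ciInf hb hbdd
  refine le_antisymm (le_ciInf hb0) (not_lt.1 fun hpos => ?_)
  obtain ⟨n, hn⟩ := ((hc.atTop_mul_const hpos).eventually_gt_atTop B).exists
  have : (∑ k ∈ Finset.range n, c k) * ⨅ k, b k ≤ ∑ k ∈ Finset.range n, c k * b k := by
    rw [Finset.sum_mul]
    exact Finset.sum_le_sum fun k _ => mul_le_mul_of_nonneg_left (ciInf_le hbdd k) (hc0 k)
  linarith [hB n]

theorem tendsto_zero_of_abs_succ_le {e g : ℕ → ℝ} {r : ℝ} (hr0 : 0 ≤ r) (hr1 : r < 1)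
    (hg : Tendsto g atTop (𝓝 0)) (h : ∀ k, |e (k + 1)| ≤ r * |e k| + g k) :
    Tendsto e atTop (𝓝 0) := by
  rw [Metric.tendsto_atTop]
  intro η hη
  obtain ⟨N, hN⟩ := (eventually_atTop.1 <| hg.eventually <|
    ge_mem_nhds (show (0 : ℝ) < (1 - r) * (η / 2) by nlinarith))
  have hgeom (m : ℕ) : |e (N + m)| ≤ r ^ m * |e N| + η / 2 := by
    induction m with
    | zero => simpa using half_pos hη |>.le
    | succ m ih =>
      calc |e (N + (m + 1))| ≤ r * |e (N + m)| + g (N + m) := h (N + m)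
        _ ≤ r * (r ^ m * |e N| + η / 2) + (1 - r) * (η / 2) := by
          gcongr; exact hN _ (Nat.le_add_right N m)
        _ = r ^ (m + 1) * |e N| + η / 2 := by ring
  obtain ⟨N', hN'⟩ := eventually_atTop.1 <|
    ((tendsto_pow_atTop_nhds_zero_of_lt_one hr0 hr1).mul_const |e N|).eventually
      (gt_mem_nhds (show (0 : ℝ) * |e N| < η / 2 by simpa using half_pos hη))
  refine ⟨N + N', fun n hn => ?_⟩
  obtain ⟨m, rfl⟩ := Nat.exists_eq_add_of_le (le_of_add_le_left hn)
  rw [Real.dist_eq, sub_zero]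
  linarith [hgeom m, hN' m (by omega)]

theorem tendsto_of_relaxed_recursion {a b lam : ℕ → ℝ} {β ε : ℝ} (hε : 0 < ε)
    (hlam : ∀ k, lam k ∈ Set.Icc ε (2 - ε)) (hb : Tendsto b atTop (𝓝 β))
    (ha : ∀ k, a (k + 1) = a k + lam k * (b k - a k)) : Tendsto a atTop (𝓝 β) := by
  have hε1 : ε ≤ 1 := by linarith [(hlam 0).1, (hlam 0).2]
  have hstep (k : ℕ) : |a (k + 1) - β| ≤ (1 - ε) * |a k - β| + 2 * |b k - β| := by
    have hcontr : |1 - lam k| ≤ 1 - ε :=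
      abs_le.2 ⟨by linarith [(hlam k).2], by linarith [(hlam k).1]⟩
    have hlam2 : |lam k| ≤ 2 := abs_le.2 ⟨by linarith [(hlam k).1], by linarith [(hlam k).2]⟩
    calc |a (k + 1) - β| = |(1 - lam k) * (a k - β) + lam k * (b k - β)| := by rw [ha k]; ring_nf
      _ ≤ |1 - lam k| * |a k - β| + |lam k| * |b k - β| := by
        rw [← abs_mul, ← abs_mul]; exact abs_add_le _ _
      _ ≤ (1 - ε) * |a k - β| + 2 * |b k - β| := by gcongr
  have hg : Tendsto (fun k => 2 * |b k - β|) atTop (𝓝 0) := by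
    simpa using ((tendsto_sub_nhds_zero_iff.2 hb).abs.const_mul 2)
  exact tendsto_sub_nhds_zero_iff.1
    (tendsto_zero_of_abs_succ_le (by linarith) (by linarith) hg hstep)

end RealSequences

section PreconditionedProximalPoint

variable {H : Type*} [NormedAddCommGroup H] [InnerProductSpace ℝ H]
  {A : Set (H × H)} {M : H →L[ℝ] H} {T : H → H}

theorem inner_map_relaxed_sub_le (hM : M.IsPositive) (hA : IsMonotoneOperator A)
    (hT : ∀ u, (T u, M (u - T u)) ∈ A) {z : H} (hz : (z, 0) ∈ A) (u : H) {t : ℝ} (ht : 0 ≤ t) :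
    ⟪M (u + t • (T u - u) - z), u + t • (T u - u) - z⟫
      ≤ ⟪M (u - z), u - z⟫ - t * (2 - t) * ⟪M (T u - u), T u - u⟫ := by
  have hmono : ⟪M (T u - u), T u - z⟫ ≤ 0 := by
    have := hA _ (hT u) _ hz
    rw [sub_zero, ← neg_sub (T u) u, map_neg, inner_neg_left] at this
    linarith
  have hsplit : ⟪M (T u - u), u - z⟫ = ⟪M (T u - u), T u - z⟫ - ⟪M (T u - u), T u - u⟫ := by
    rw [← inner_sub_right, sub_sub_sub_cancel_left]
  rw [show u + t • (T u - u) - z = u - z + t • (T u - u) by abel, hM.inner_map_add_smul, hsplit]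
  nlinarith [mul_nonpos_of_nonneg_of_nonpos ht hmono]

theorem inner_map_residual_relaxed_le (hM : M.IsPositive) (hA : IsMonotoneOperator A)
    (hT : ∀ u, (T u, M (u - T u)) ∈ A) (u : H) {t : ℝ} (ht : t ∈ Set.Icc (0 : ℝ) 2) :
    ⟪M (T (u + t • (T u - u)) - (u + t • (T u - u))), T (u + t • (T u - u)) - (u + t • (T u - u))⟫
      ≤ ⟪M (T u - u), T u - u⟫ := by
  rcases ht.1.eq_or_lt with rfl | htpos
  · simp only [zero_smul, add_zero, le_refl]
  set u' := u + t • (T u - u)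
  set d := T u - u
  set e := (T u' - u') - d
  have hmono : ⟪M e, e⟫ + t * ⟪M e, d⟫ ≤ 0 := by
    have := hA _ (hT u') _ (hT u)
    rw [show M (u' - T u') - M (u - T u) = -M e by simp only [e, d, map_sub]; abel,
      show T u' - T u = e + t • d by simp only [e, d, u']; abel,
      inner_neg_left, inner_add_right, real_inner_smul_right] at this
    linarith
  have he : 0 ≤ ⟪M e, e⟫ := hM.inner_nonneg_left e
  have hX : ⟪M e, d⟫ ≤ 0 := by nlinarith
  have := hM.inner_map_add_smul d e 1
  rw [one_smul, show d + e = T u' - u' by simp only [e]; abel] at this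
  rw [this]
  nlinarith [ht.2]

theorem map_sub_eq_zero_of_weakTendsto (hM : M.IsPositive) {u w : ℕ → H} {a b : H}
    (ha : ∃ l, Tendsto (fun k => ⟪M (u k - a), u k - a⟫) atTop (𝓝 l))
    (hb : ∃ l, Tendsto (fun k => ⟪M (u k - b), u k - b⟫) atTop (𝓝 l))
    (hres : Tendsto (fun k => M (u k - w k)) atTop (𝓝 0)) {φ ψ : ℕ → ℕ}
    (hφ : Tendsto φ atTop atTop) (hψ : Tendsto ψ atTop atTop)
    (hwa : WeakTendsto (w ∘ φ) a) (hwb : WeakTendsto (w ∘ ψ) b) : M (a - b) = 0 := by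
  obtain ⟨la, hla⟩ := ha
  obtain ⟨lb, hlb⟩ := hb
  have hpolar (k : ℕ) : ⟪w k, M (a - b)⟫ = (⟪M (u k - b), u k - b⟫ - ⟪M (u k - a), u k - a⟫
      + ⟪M a, a⟫ - ⟪M b, b⟫) / 2 - ⟪M (u k - w k), a - b⟫ := by
    rw [← hM.inner_left_eq_inner_right, hM.inner_map_sub, hM.inner_map_sub, map_sub]
    simp only [inner_sub_left, inner_sub_right]
    linear_combination hM.inner_map_comm (u k) a - hM.inner_map_comm (u k) b
  set l := (lb - la + ⟪M a, a⟫ - ⟪M b, b⟫) / 2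
  have hlim : Tendsto (fun k => ⟪w k, M (a - b)⟫) atTop (𝓝 l) := by
    have := (((hlb.sub hla).add_const ⟪M a, a⟫).sub_const ⟪M b, b⟫).div_const 2 |>.sub
      (hres.inner (tendsto_const_nhds (x := a - b)))
    simpa only [hpolar, inner_zero_left, sub_zero] using this
  have hlim_of (c : H) (σ : ℕ → ℕ) (hσ : Tendsto σ atTop atTop) (hwc : WeakTendsto (w ∘ σ) c) :
      ⟪c, M (a - b)⟫ = l :=
    tendsto_nhds_unique (hwc (M (a - b))) (hlim.comp hσ)
  refine hM.map_eq_zero_of_inner_eq_zero ?_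
  rw [hM.inner_left_eq_inner_right, inner_sub_left, hlim_of a φ hφ hwa, hlim_of b ψ hψ hwb,
    sub_self]

variable {u : ℕ → H} {lam : ℕ → ℝ}

theorem antitone_inner_map_sub_of_zero (hM : M.IsPositive) (hA : IsMonotoneOperator A)
    (hT : ∀ u, (T u, M (u - T u)) ∈ A) (hlam : ∀ k, lam k ∈ Set.Icc (0 : ℝ) 2)
    (hiter : ∀ k, u (k + 1) = u k + lam k • (T (u k) - u k)) {z : H} (hz : (z, 0) ∈ A) :
    Antitone fun k => ⟪M (u k - z), u k - z⟫ := by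
  refine antitone_nat_of_succ_le fun k => ?_
  have hstep := inner_map_relaxed_sub_le hM hA hT hz (u k) (hlam k).1
  rw [← hiter] at hstep
  have := mul_nonneg (mul_nonneg (hlam k).1 (sub_nonneg.2 (hlam k).2))
    (hM.inner_nonneg_left (T (u k) - u k))
  linarith

theorem exists_tendsto_inner_map_sub_of_zero (hM : M.IsPositive) (hA : IsMonotoneOperator A)
    (hT : ∀ u, (T u, M (u - T u)) ∈ A) (hlam : ∀ k, lam k ∈ Set.Icc (0 : ℝ) 2)
    (hiter : ∀ k, u (k + 1) = u k + lam k • (T (u k) - u k)) {z : H} (hz : (z, 0) ∈ A) :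
    ∃ l, Tendsto (fun k => ⟪M (u k - z), u k - z⟫) atTop (𝓝 l) :=
  ⟨_, tendsto_atTop_ciInf (antitone_inner_map_sub_of_zero hM hA hT hlam hiter hz)
    ⟨0, Set.forall_mem_range.2 fun _ => hM.inner_nonneg_left _⟩⟩

theorem tendsto_map_residual (hM : M.IsPositive) (hA : IsMonotoneOperator A)
    (hT : ∀ u, (T u, M (u - T u)) ∈ A) (hlam : ∀ k, lam k ∈ Set.Icc (0 : ℝ) 2)
    (hdiv : Tendsto (fun n => ∑ k ∈ Finset.range n, lam k * (2 - lam k)) atTop atTop)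
    (hiter : ∀ k, u (k + 1) = u k + lam k • (T (u k) - u k)) {z : H} (hz : (z, 0) ∈ A) :
    Tendsto (fun k => M (u k - T (u k))) atTop (𝓝 0) := by
  set q : ℕ → ℝ := fun k => ⟪M (u k - z), u k - z⟫
  have hsum (n : ℕ) : ∑ k ∈ Finset.range n, lam k * (2 - lam k) * ⟪M (T (u k) - u k), T (u k) - u k⟫
      ≤ q 0 := by
    have hstep (k : ℕ) := inner_map_relaxed_sub_le hM hA hT hz (u k) (hlam k).1
    calc _ ≤ ∑ k ∈ Finset.range n, (q k - q (k + 1)) :=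
          Finset.sum_le_sum fun k _ => by simp only [q, hiter k]; linarith [hstep k]
      _ = q 0 - q n := Finset.sum_range_sub' q n
      _ ≤ q 0 := sub_le_self _ (hM.inner_nonneg_left _)
  have hres := tendsto_zero_of_antitone_of_sum_mul_le_s8
    (antitone_nat_of_succ_le fun k =>
      hiter k ▸ inner_map_residual_relaxed_le hM hA hT (u k) (hlam k))
    (fun k => hM.inner_nonneg_left _)
    (fun k => mul_nonneg (hlam k).1 (sub_nonneg.2 (hlam k).2)) hdiv hsum
  have hsqrt := (hres.const_mul ‖M‖).sqrt
  rw [mul_zero, Real.sqrt_zero] at hsqrt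
  refine squeeze_zero_norm (fun k => ?_) hsqrt
  rw [← neg_sub, map_neg, norm_neg]
  exact hM.norm_le_sqrt _

theorem norm_resolvent_le (hM : M.IsPositive) (hA : IsMonotoneOperator A)
    (hT : ∀ u, (T u, M (u - T u)) ∈ A) {L : ℝ}
    (hLip : ∀ v v' u u' : H, (u, v - M u) ∈ A → (u', v' - M u') ∈ A → ‖u - u'‖ ≤ L * ‖v - v'‖)
    (hlam : ∀ k, lam k ∈ Set.Icc (0 : ℝ) 2)
    (hiter : ∀ k, u (k + 1) = u k + lam k • (T (u k) - u k)) {z : H} (hz : (z, 0) ∈ A) (k : ℕ) :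
    ‖T (u k)‖ ≤ ‖z‖ + |L| * √(‖M‖ * ⟪M (u 0 - z), u 0 - z⟫) := by
  have hdist : ‖T (u k) - z‖ ≤ L * ‖M (u k - z)‖ := by
    have hTk := hT (u k)
    rw [map_sub] at hTk
    simpa using hLip (M (u k)) (M z) (T (u k)) z hTk (by simpa using hz)
  have hMdist : ‖M (u k - z)‖ ≤ √(‖M‖ * ⟪M (u 0 - z), u 0 - z⟫) :=
    (hM.norm_le_sqrt _).trans <| Real.sqrt_le_sqrt <| mul_le_mul_of_nonneg_left
      (antitone_inner_map_sub_of_zero hM hA hT hlam hiter hz (Nat.zero_le k)) (norm_nonneg M)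
  calc ‖T (u k)‖ ≤ ‖T (u k) - z‖ + ‖z‖ := norm_le_norm_sub_add _ _
    _ ≤ |L| * ‖M (u k - z)‖ + ‖z‖ := by gcongr; exact hdist.trans (by gcongr; exact le_abs_self L)
    _ ≤ ‖z‖ + |L| * √(‖M‖ * ⟪M (u 0 - z), u 0 - z⟫) := by rw [add_comm]; gcongr

end PreconditionedProximalPoint

/-- Convergence of the degenerate PPP method: if `A` is maximal monotone with a zero and
`(M+A)⁻¹` is `L`-Lipschitz, then `{T u^k}` converges weakly to a fixed point of `T`
(a zero of `A`); if moreover `0 < inf λ_k ≤ sup λ_k < 2`, so does `{u^k}`. -/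
theorem stmt8 {H : Type} [NormedAddCommGroup H] [InnerProductSpace ℝ H] [CompleteSpace H]
    (A : Set (H × H)) (M : H →L[ℝ] H) (T : H → H) (L : ℝ)
    (hMsa : ∀ x y : H, (inner ℝ (M x) y : ℝ) = inner ℝ x (M y))
    (hMpos : ∀ x : H, 0 ≤ (inner ℝ (M x) x : ℝ))
    -- `A` maximal monotone
    (hAmono : ∀ p ∈ A, ∀ q ∈ A, 0 ≤ (inner ℝ (p.2 - q.2) (p.1 - q.1) : ℝ))
    (hAmax : ∀ p : H × H, (∀ q ∈ A, 0 ≤ (inner ℝ (p.2 - q.2) (p.1 - q.1) : ℝ)) → p ∈ A)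
    -- `zer A ≠ ∅`
    (hzer : ∃ x : H, (x, (0 : H)) ∈ A)
    -- admissibility: `T = (M+A)⁻¹ M` single-valued with full domain
    (hT : ∀ u : H, (T u, M (u - T u)) ∈ A)
    (hTuniq : ∀ u v : H, (v, M (u - v)) ∈ A → v = T u)
    -- `(M+A)⁻¹` is `L`-Lipschitz
    (hLip : ∀ v v' u u' : H, (u, v - M u) ∈ A → (u', v' - M u') ∈ A →
        ‖u - u'‖ ≤ L * ‖v - v'‖)
    (lam : ℕ → ℝ) (hlam : ∀ k, lam k ∈ Set.Icc (0 : ℝ) 2)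
    (hdiv : Tendsto (fun n => ∑ k ∈ Finset.range n, lam k * (2 - lam k)) atTop atTop)
    (u : ℕ → H) (hiter : ∀ k, u (k + 1) = u k + lam k • (T (u k) - u k)) :
    ∃ ustar : H, T ustar = ustar ∧
      (∀ v : H, Tendsto (fun k => (inner ℝ (T (u k)) v : ℝ)) atTop (nhds (inner ℝ ustar v))) ∧
      ((∃ ε > (0 : ℝ), ∀ k, lam k ∈ Set.Icc ε (2 - ε)) →
        ∀ v : H, Tendsto (fun k => (inner ℝ (u k) v : ℝ)) atTop (nhds (inner ℝ ustar v))) := by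
  have hM : M.IsPositive := (M.isPositive_iff).2 ⟨hMsa, hMpos⟩
  have hfix (z : H) (hz : (z, 0) ∈ A) : T z = z := (hTuniq z z (by simpa using hz)).symm
  obtain ⟨z, hz⟩ := hzer
  have hbdd := norm_resolvent_le hM hAmono hT hLip hlam hiter hz
  have hres := tendsto_map_residual hM hAmono hT hlam hdiv hiter hz
  have hzero (φ : ℕ → ℕ) (hφ : Tendsto φ atTop atTop) (q : H) (hq : WeakTendsto (T ∘ u ∘ φ) q) :
      (q, 0) ∈ A :=
    mem_of_weakTendsto_of_tendsto hAmono hAmax (fun j => hT (u (φ j))) hq (fun j => hbdd (φ j))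
      (hres.comp hφ)
  obtain ⟨p, φ, hφ, hp⟩ := exists_strictMono_weakTendsto_of_bounded hbdd
  have hpA := hzero φ hφ.tendsto_atTop p hp
  have hTu : WeakTendsto (T ∘ u) p := weakTendsto_of_forall_subseq hbdd fun ψ hψ q hq => by
    have hqA := hzero ψ hψ q hq
    have hqp := map_sub_eq_zero_of_weakTendsto hM
      (exists_tendsto_inner_map_sub_of_zero hM hAmono hT hlam hiter hqA)
      (exists_tendsto_inner_map_sub_of_zero hM hAmono hT hlam hiter hpA) hres hψ
      hφ.tendsto_atTop hq hp
    calc q = T q := (hfix q hqA).symm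
      _ = p := (hTuniq q p (by rwa [hqp])).symm
  refine ⟨p, hfix p hpA, hTu, fun ⟨ε, hε, hlamε⟩ v => ?_⟩
  exact tendsto_of_relaxed_recursion (b := fun k => ⟪T (u k), v⟫) hε hlamε (hTu v) fun k => by
    rw [hiter k, inner_add_left, real_inner_smul_left, inner_sub_left]
end

section
/- Let A : H → 2^H, M = C C* an admissible preconditioner with closed range (so C* surjective). Then the parallel composition C* ▷ A := (C* A⁻¹ C)⁻¹ equals the set {(C* x, C* y) : (x,y) ∈ graph(M⁻¹A)}. -/
/-- The parallel composition `C* ▷ A := (C* A⁻¹ C)⁻¹` equals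
`{(C* x, C* y) : (x,y) ∈ graph (M⁻¹A)}`. -/
theorem stmt9 {H D : Type} [NormedAddCommGroup H] [InnerProductSpace ℝ H] [CompleteSpace H]
    [NormedAddCommGroup D] [InnerProductSpace ℝ D] [CompleteSpace D]
    (A : Set (H × H)) (M : H →L[ℝ] H) (C : D →L[ℝ] H)
    (hC : Function.Injective C)
    (hCsurj : Function.Surjective (ContinuousLinearMap.adjoint C))
    (hM : M = C ∘L (ContinuousLinearMap.adjoint C))
    -- admissibility: `T = (M+A)⁻¹M` single-valued with full domain
    (T : H → H)
    (hT : ∀ u : H, (T u, M (u - T u)) ∈ A)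
    (hTuniq : ∀ u v : H, (v, M (u - v)) ∈ A → v = T u) :
    -- `(C* A⁻¹ C)⁻¹`
    {p : D × D | ∃ x : H, (x, C p.2) ∈ A ∧ p.1 = (ContinuousLinearMap.adjoint C) x}
      = {p : D × D | ∃ x y : H, (x, M y) ∈ A ∧
          p.1 = (ContinuousLinearMap.adjoint C) x ∧
          p.2 = (ContinuousLinearMap.adjoint C) y} := by
  ext p
  simp only [Set.mem_setOf_eq]
  constructor
  · rintro ⟨x, hxA, hx⟩
    obtain ⟨y, hy⟩ := hCsurj p.2
    exact ⟨x, y, by simpa [hM, hy] using hxA, hx, hy.symm⟩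
  · rintro ⟨x, y, hxA, hx, hy⟩
    exact ⟨x, by simpa [hM, hy] using hxA, hx⟩
end

section
/- Let A : H → 2^H with M = C C* an admissible preconditioner with closed range such that M⁻¹A is M-monotone. Then C* ▷ A = (C* A⁻¹ C)⁻¹ is maximal monotone on D and its resolvent satisfies (I + C* A⁻¹ C)⁻¹ = C* (M + A)⁻¹ C; in particular this resolvent is everywhere defined, single-valued and firmly nonexpansive on D. -/
/-!
Writing `M = C C*`, the relation `(C* x, w) ∈ C* ▷ A ⇔ (x, C w) ∈ A` transports the
`M`-monotonicity of `M⁻¹A` to monotonicity of `C* ▷ A`, because `⟪C w, x⟫ = ⟪w, C* x⟫` and every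
`w ∈ D` is of the form `C* v`. The same relation shows that `p = C* x` solves `w ∈ p + (C* ▷ A) p`
exactly when `C w ∈ M x + A x`, i.e. `x = (M + A)⁻¹ (C w)`. A relation whose resolvent has full
domain contains every pair monotonically related to it, and a monotone relation has a firmly
nonexpansive resolvent.
-/

open scoped InnerProduct InnerProductSpace

section MonotoneRelation

variable {E : Type*} [NormedAddCommGroup E] [InnerProductSpace ℝ E]

def IsMonotoneRel (G : Set (E × E)) : Prop :=
  ∀ p ∈ G, ∀ q ∈ G, 0 ≤ ⟪p.2 - q.2, p.1 - q.1⟫_ℝ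

def HasTotalResolvent (G : Set (E × E)) : Prop :=
  ∀ w : E, ∃ r : E, (r, w - r) ∈ G

theorem HasTotalResolvent.mem_of_forall_inner_nonneg {G : Set (E × E)}
    (hG : HasTotalResolvent G) {p : E × E} (hp : ∀ q ∈ G, 0 ≤ ⟪p.2 - q.2, p.1 - q.1⟫_ℝ) :
    p ∈ G := by
  obtain ⟨r, hr⟩ := hG (p.1 + p.2)
  have hinner : ⟪p.1 - r, p.1 - r⟫_ℝ ≤ 0 := by
    have h := hp _ hr
    rw [show p.2 - (p.1 + p.2 - r) = -(p.1 - r) by abel, inner_neg_left] at h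
    linarith
  have hp1 : p.1 = r := sub_eq_zero.mp (inner_self_eq_zero.mp
    (le_antisymm hinner real_inner_self_nonneg))
  convert hr using 1
  exact Prod.ext hp1 (by rw [← hp1, add_sub_cancel_left])

theorem IsMonotoneRel.firmly_nonexpansive {G : Set (E × E)} (hG : IsMonotoneRel G)
    {w₁ w₂ r₁ r₂ : E} (h₁ : (r₁, w₁ - r₁) ∈ G) (h₂ : (r₂, w₂ - r₂) ∈ G) :
    ‖r₁ - r₂‖ ^ 2 + ‖(w₁ - r₁) - (w₂ - r₂)‖ ^ 2 ≤ ‖w₁ - w₂‖ ^ 2 := by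
  have hmono := hG _ h₁ _ h₂
  have expand : ‖w₁ - w₂‖ ^ 2 = ‖r₁ - r₂‖ ^ 2 + ‖(w₁ - r₁) - (w₂ - r₂)‖ ^ 2
      + 2 * ⟪(w₁ - r₁) - (w₂ - r₂), r₁ - r₂⟫_ℝ := by
    rw [show w₁ - w₂ = (r₁ - r₂) + ((w₁ - r₁) - (w₂ - r₂)) by abel, norm_add_sq_real,
      real_inner_comm]
    ring
  linarith

end MonotoneRelation

section ParallelComp

variable {H D : Type*} [NormedAddCommGroup H] [InnerProductSpace ℝ H] [CompleteSpace H]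
  [NormedAddCommGroup D] [InnerProductSpace ℝ D] [CompleteSpace D]

/-- The graph of the parallel composition `C* ▷ A = (C* A⁻¹ C)⁻¹`. -/
def parallelComp (C : D →L[ℝ] H) (A : Set (H × H)) : Set (D × D) :=
  {p | ∃ x : H, (x, C p.2) ∈ A ∧ p.1 = (C†) x}

theorem isMonotoneRel_parallelComp {C : D →L[ℝ] H} {A : Set (H × H)}
    (hCsurj : Function.Surjective (C†))
    (hmono : ∀ u v u' v' : H, (u, (C ∘L C†) v) ∈ A → (u', (C ∘L C†) v') ∈ A →
      0 ≤ ⟪(C ∘L C†) (v - v'), u - u'⟫_ℝ) :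
    IsMonotoneRel (parallelComp C A) := by
  rintro ⟨-, w⟩ ⟨x, hx, rfl⟩ ⟨-, w'⟩ ⟨x', hx', rfl⟩
  obtain ⟨v, rfl⟩ := hCsurj w
  obtain ⟨v', rfl⟩ := hCsurj w'
  have h := hmono x v x' v' hx hx'
  rwa [ContinuousLinearMap.comp_apply, ← ContinuousLinearMap.adjoint_inner_right, map_sub,
    map_sub] at h

theorem mem_parallelComp_resolvent_iff {C : D →L[ℝ] H} {A : Set (H × H)} {J : H → H}
    (hJ : ∀ v : H, (J v, v - (C ∘L C†) (J v)) ∈ A)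
    (hJuniq : ∀ v w : H, (w, v - (C ∘L C†) w) ∈ A → w = J v) (w p : D) :
    (p, w - p) ∈ parallelComp C A ↔ p = (C†) (J (C w)) := by
  constructor
  · rintro ⟨x, hx, rfl⟩
    rw [map_sub] at hx
    rw [hJuniq (C w) x hx]
  · rintro rfl
    refine ⟨J (C w), ?_, rfl⟩
    rw [map_sub]
    exact hJ (C w)

end ParallelComp

theorem stmt10_general {H D : Type} [NormedAddCommGroup H] [InnerProductSpace ℝ H] [CompleteSpace H]
    [NormedAddCommGroup D] [InnerProductSpace ℝ D] [CompleteSpace D]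
    (A : Set (H × H)) (M : H →L[ℝ] H) (C : D →L[ℝ] H)
    (hCsurj : Function.Surjective (ContinuousLinearMap.adjoint C))
    (hM : M = C ∘L (ContinuousLinearMap.adjoint C))
    -- `J = (M+A)⁻¹`, single-valued with full domain (admissibility)
    (J : H → H)
    (hJ : ∀ v : H, (J v, v - M (J v)) ∈ A)
    (hJuniq : ∀ v w : H, (w, v - M w) ∈ A → w = J v)
    -- `M⁻¹A` is `M`-monotone
    (hmono : ∀ u v u' v' : H, (u, M v) ∈ A → (u', M v') ∈ A →
        0 ≤ (inner ℝ (M (v - v')) (u - u') : ℝ))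
    -- the graph of `C* ▷ A = (C* A⁻¹ C)⁻¹`
    (CA : Set (D × D))
    (hCA : CA = {p : D × D | ∃ x : H, (x, C p.2) ∈ A ∧
        p.1 = (ContinuousLinearMap.adjoint C) x}) :
    -- monotone
    (∀ p ∈ CA, ∀ q ∈ CA, 0 ≤ (inner ℝ (p.2 - q.2) (p.1 - q.1) : ℝ)) ∧
    -- maximal
    (∀ p : D × D, (∀ q ∈ CA, 0 ≤ (inner ℝ (p.2 - q.2) (p.1 - q.1) : ℝ)) → p ∈ CA) ∧
    -- the resolvent `(I + C* ▷ A)⁻¹` coincides with `C* (M+A)⁻¹ C`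
    (∀ w p : D, (p, w - p) ∈ CA ↔ p = (ContinuousLinearMap.adjoint C) (J (C w))) ∧
    -- firm nonexpansiveness of this resolvent
    (∀ w₁ w₂ : D,
      ‖(ContinuousLinearMap.adjoint C) (J (C w₁)) - (ContinuousLinearMap.adjoint C) (J (C w₂))‖ ^ 2
        + ‖(w₁ - (ContinuousLinearMap.adjoint C) (J (C w₁)))
            - (w₂ - (ContinuousLinearMap.adjoint C) (J (C w₂)))‖ ^ 2
      ≤ ‖w₁ - w₂‖ ^ 2) := by
  subst hM
  have hCA' : CA = parallelComp C A := hCA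
  subst hCA'
  have hG := isMonotoneRel_parallelComp hCsurj hmono
  have hres := mem_parallelComp_resolvent_iff hJ hJuniq
  have hres_mem (w : D) : ((C†) (J (C w)), w - (C†) (J (C w))) ∈ parallelComp C A :=
    (hres w _).2 rfl
  have htotal : HasTotalResolvent (parallelComp C A) := fun w => ⟨_, hres_mem w⟩
  exact ⟨hG, fun _ => htotal.mem_of_forall_inner_nonneg, hres,
    fun w₁ w₂ => hG.firmly_nonexpansive (hres_mem w₁) (hres_mem w₂)⟩

/-- `C* ▷ A` is maximal monotone and its resolvent is `C* (M+A)⁻¹ C`, which is hence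
everywhere defined, single-valued and firmly nonexpansive on `D`. -/
theorem stmt10 {H D : Type} [NormedAddCommGroup H] [InnerProductSpace ℝ H] [CompleteSpace H]
    [NormedAddCommGroup D] [InnerProductSpace ℝ D] [CompleteSpace D]
    (A : Set (H × H)) (M : H →L[ℝ] H) (C : D →L[ℝ] H)
    (hC : Function.Injective C)
    (hCsurj : Function.Surjective (ContinuousLinearMap.adjoint C))
    (hM : M = C ∘L (ContinuousLinearMap.adjoint C))
    -- `J = (M+A)⁻¹`, single-valued with full domain (admissibility)
    (J : H → H)
    (hJ : ∀ v : H, (J v, v - M (J v)) ∈ A)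
    (hJuniq : ∀ v w : H, (w, v - M w) ∈ A → w = J v)
    -- `M⁻¹A` is `M`-monotone
    (hmono : ∀ u v u' v' : H, (u, M v) ∈ A → (u', M v') ∈ A →
        0 ≤ (inner ℝ (M (v - v')) (u - u') : ℝ))
    -- the graph of `C* ▷ A = (C* A⁻¹ C)⁻¹`
    (CA : Set (D × D))
    (hCA : CA = {p : D × D | ∃ x : H, (x, C p.2) ∈ A ∧
        p.1 = (ContinuousLinearMap.adjoint C) x}) :
    -- monotone
    (∀ p ∈ CA, ∀ q ∈ CA, 0 ≤ (inner ℝ (p.2 - q.2) (p.1 - q.1) : ℝ)) ∧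
    -- maximal
    (∀ p : D × D, (∀ q ∈ CA, 0 ≤ (inner ℝ (p.2 - q.2) (p.1 - q.1) : ℝ)) → p ∈ CA) ∧
    -- the resolvent `(I + C* ▷ A)⁻¹` coincides with `C* (M+A)⁻¹ C`
    (∀ w p : D, (p, w - p) ∈ CA ↔ p = (ContinuousLinearMap.adjoint C) (J (C w))) ∧
    -- firm nonexpansiveness of this resolvent
    (∀ w₁ w₂ : D,
      ‖(ContinuousLinearMap.adjoint C) (J (C w₁)) - (ContinuousLinearMap.adjoint C) (J (C w₂))‖ ^ 2
        + ‖(w₁ - (ContinuousLinearMap.adjoint C) (J (C w₁)))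
            - (w₂ - (ContinuousLinearMap.adjoint C) (J (C w₂)))‖ ^ 2
      ≤ ‖w₁ - w₂‖ ^ 2) :=
  stmt10_general A M C hCsurj hM J hJ hJuniq hmono CA hCA
end

section
/- Under the assumptions of the reduction theorem (M = C C* closed range admissible preconditioner, M⁻¹A M-monotone, zer A ≠ ∅), the fixed points satisfy C*(Fix T) = Fix T̃, where T = (M+A)⁻¹M and T̃ = C*(M+A)⁻¹C. Moreover, if w ∈ Fix T̃ then u := (M+A)⁻¹C w ∈ Fix T and C* u = w. -/
/-! With `M = C C*` we have `T = (J ∘ C) ∘ C*` and `T̃ = C* ∘ (J ∘ C)` for `J = (M+A)⁻¹`, so the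
statement is the general fact that any maps `f = C*` and `g = J ∘ C` are mutually inverse
bijections between the fixed points of `g ∘ f` and of `f ∘ g`. -/

theorem stmt11_general {H D : Type} [NormedAddCommGroup H] [InnerProductSpace ℝ H] [CompleteSpace H]
    [NormedAddCommGroup D] [InnerProductSpace ℝ D] [CompleteSpace D]
    (M : H →L[ℝ] H) (C : D →L[ℝ] H)
    (hM : M = C ∘L (ContinuousLinearMap.adjoint C))
    -- `J = (M+A)⁻¹`, single-valued with full domain (admissibility)
    (J : H → H)
    -- `T = (M+A)⁻¹ M` and `T̃ = C* (M+A)⁻¹ C`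
    (T : H → H) (hT : ∀ u, T u = J (M u))
    (Tt : D → D) (hTt : ∀ w, Tt w = (ContinuousLinearMap.adjoint C) (J (C w))) :
    (ContinuousLinearMap.adjoint C) '' {u : H | T u = u} = {w : D | Tt w = w} ∧
    (∀ w : D, Tt w = w →
      T (J (C w)) = J (C w) ∧ (ContinuousLinearMap.adjoint C) (J (C w)) = w) := by
  set f : H → D := ⇑(ContinuousLinearMap.adjoint C)
  have hT_comp : T = (J ∘ C) ∘ f := funext fun u => by simp [hT, hM, f]
  have hTt_comp : Tt = f ∘ (J ∘ C) := funext hTt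
  subst hT_comp hTt_comp
  exact ⟨(Function.bijOn_fixedPoints_comp (J ∘ C) f).image_eq,
    fun w hw => ⟨Function.mapsTo_fixedPoints_comp (J ∘ C) f hw, hw⟩⟩

/-- `C* (Fix T) = Fix T̃`, and for `w ∈ Fix T̃`, `u := (M+A)⁻¹ C w ∈ Fix T` with `C* u = w`. -/
theorem stmt11 {H D : Type} [NormedAddCommGroup H] [InnerProductSpace ℝ H] [CompleteSpace H]
    [NormedAddCommGroup D] [InnerProductSpace ℝ D] [CompleteSpace D]
    (A : Set (H × H)) (M : H →L[ℝ] H) (C : D →L[ℝ] H)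
    (hC : Function.Injective C)
    (hCsurj : Function.Surjective (ContinuousLinearMap.adjoint C))
    (hM : M = C ∘L (ContinuousLinearMap.adjoint C))
    -- `J = (M+A)⁻¹`, single-valued with full domain (admissibility)
    (J : H → H)
    (hJ : ∀ v : H, (J v, v - M (J v)) ∈ A)
    (hJuniq : ∀ v w : H, (w, v - M w) ∈ A → w = J v)
    -- `M⁻¹A` is `M`-monotone
    (hmono : ∀ u v u' v' : H, (u, M v) ∈ A → (u', M v') ∈ A →
        0 ≤ (inner ℝ (M (v - v')) (u - u') : ℝ))
    -- `zer A ≠ ∅`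
    (hzer : ∃ x : H, (x, (0 : H)) ∈ A)
    -- `T = (M+A)⁻¹ M` and `T̃ = C* (M+A)⁻¹ C`
    (T : H → H) (hT : ∀ u, T u = J (M u))
    (Tt : D → D) (hTt : ∀ w, Tt w = (ContinuousLinearMap.adjoint C) (J (C w))) :
    (ContinuousLinearMap.adjoint C) '' {u : H | T u = u} = {w : D | Tt w = w} ∧
    (∀ w : D, Tt w = w →
      T (J (C w)) = J (C w) ∧ (ContinuousLinearMap.adjoint C) (J (C w)) = w) :=
  stmt11_general M C hM J T hT Tt hTt
end

section
/- If C* restricted to Im M (= (ker M)^⊥) is equipped with the inner product ⟨u,v⟩_M = ⟨Mu,v⟩, then C*|_{Im M} : Im M → D is an isometric isomorphism, where M = C C* is a closed-range positive semi-definite operator decomposition with C injective and C* surjective. -/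
/-!
Since `Im M` is closed, `H = Im M ⊕ (Im M)ᗮ`, and `(Im M)ᗮ = ker M* = ker (C C*) = ker C*`.
So `Im M` is a complement of `ker C*`, on which `C*` is injective with the same range as on all
of `H`. The isometry is the adjoint identity `⟨C* u, C* v⟩ = ⟨C C* u, v⟩`.
-/

open ContinuousLinearMap
open scoped InnerProduct

namespace Submodule

variable {𝕜 E F : Type*} [RCLike 𝕜] [NormedAddCommGroup E] [InnerProductSpace 𝕜 E]
  [AddCommGroup F] [Module 𝕜 F]

theorem bijOn_range_of_orthogonal_eq_ker (K : Submodule 𝕜 E) [K.HasOrthogonalProjection]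
    (f : E →ₗ[𝕜] F) (hK : Kᗮ = LinearMap.ker f) : Set.BijOn f K (Set.range f) := by
  refine ⟨fun _ _ ↦ Set.mem_range_self _, fun u hu v hv huv ↦ ?_, ?_⟩
  · have hker : u - v ∈ Kᗮ := by rw [hK, LinearMap.mem_ker, map_sub, huv, sub_self]
    have hmem : u - v ∈ K ⊓ Kᗮ := ⟨K.sub_mem hu hv, hker⟩
    rwa [K.inf_orthogonal_eq_bot, mem_bot, sub_eq_zero] at hmem
  · rintro _ ⟨x, rfl⟩
    obtain ⟨p, hp, q, hq, rfl⟩ := K.exists_add_mem_mem_orthogonal x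
    rw [hK] at hq
    exact ⟨p, hp, by rw [map_add, LinearMap.mem_ker.mp hq, add_zero]⟩

end Submodule

namespace ContinuousLinearMap

variable {𝕜 E F : Type*} [RCLike 𝕜] [NormedAddCommGroup E] [InnerProductSpace 𝕜 E]
  [NormedAddCommGroup F] [InnerProductSpace 𝕜 F] [CompleteSpace E] [CompleteSpace F]

theorem orthogonal_range_self_comp_adjoint (T : E →L[𝕜] F) :
    (T ∘L T†).rangeᗮ = T†.ker := by
  rw [orthogonal_range, adjoint_comp, adjoint_adjoint, ker_self_comp_adjoint]

end ContinuousLinearMap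

theorem stmt13_general {H D : Type} [NormedAddCommGroup H] [InnerProductSpace ℝ H] [CompleteSpace H]
    [NormedAddCommGroup D] [InnerProductSpace ℝ D] [CompleteSpace D]
    (M : H →L[ℝ] H) (C : D →L[ℝ] H)
    (hMclosed : IsClosed (Set.range M))
    (hCsurj : Function.Surjective (ContinuousLinearMap.adjoint C))
    (hM : M = C ∘L (ContinuousLinearMap.adjoint C)) :
    Set.BijOn (ContinuousLinearMap.adjoint C) (Set.range M) Set.univ ∧
    (∀ u v : H, (inner ℝ ((ContinuousLinearMap.adjoint C) u)
        ((ContinuousLinearMap.adjoint C) v) : ℝ) = (inner ℝ (M u) v : ℝ)) := by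
  have : CompleteSpace M.range := hMclosed.completeSpace_coe
  have hbij := M.range.bijOn_range_of_orthogonal_eq_ker (C† : H →ₗ[ℝ] D)
    (hM ▸ C.orthogonal_range_self_comp_adjoint)
  refine ⟨by simpa [hCsurj.range_eq, LinearMap.coe_range] using hbij, fun u v ↦ ?_⟩
  rw [hM]
  exact C.adjoint_inner_right _ v

/-- `C*` restricted to `Im M`, with `Im M` endowed with the `M`-inner product, is an
isometric isomorphism onto `D`: it maps `Im M` bijectively onto `D` and satisfies
`‖C* u‖² = ⟨M u, u⟩` for all `u`. -/
theorem stmt13 {H D : Type} [NormedAddCommGroup H] [InnerProductSpace ℝ H] [CompleteSpace H]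
    [NormedAddCommGroup D] [InnerProductSpace ℝ D] [CompleteSpace D]
    (M : H →L[ℝ] H) (C : D →L[ℝ] H)
    (hMsa : ∀ x y : H, (inner ℝ (M x) y : ℝ) = inner ℝ x (M y))
    (hMpos : ∀ x : H, 0 ≤ (inner ℝ (M x) x : ℝ))
    (hMclosed : IsClosed (Set.range M))
    (hC : Function.Injective C)
    (hCsurj : Function.Surjective (ContinuousLinearMap.adjoint C))
    (hM : M = C ∘L (ContinuousLinearMap.adjoint C)) :
    Set.BijOn (ContinuousLinearMap.adjoint C) (Set.range M) Set.univ ∧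
    (∀ u v : H, (inner ℝ ((ContinuousLinearMap.adjoint C) u)
        ((ContinuousLinearMap.adjoint C) v) : ℝ) = (inner ℝ (M u) v : ℝ)) :=
  stmt13_general M C hMclosed hCsurj hM
end

section
/- Let M = C C* be an admissible preconditioner for A. Then M⁻¹A is M-α-strongly monotone with α > 0 if and only if C* ▷ A = (C* A⁻¹ C)⁻¹ is α-strongly monotone on D; in that case the resolvent T̃ = (I + C* ▷ A)⁻¹ is a Lipschitz contraction with constant 1/(1+α). -/
/-!
Since `M = C C*`, the `M`-inner product is pulled back from `D`: `⟪M x, y⟫ = ⟪C* x, C* y⟫`.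
Moreover `(u, M v) ∈ A` exactly when `(C* u, C* v)` lies in the graph of `C* ▷ A`, and `C*` is
onto, so the two strong monotonicity inequalities are the same inequality read in `H` and in `D`.
The resolvent of `C* ▷ A` at `w` is `C* J (C w)`, and an `α`-strongly monotone operator has a
`1/(1+α)`-Lipschitz resolvent by Cauchy–Schwarz.
-/

open ContinuousLinearMap RealInnerProductSpace

section StronglyMonotone

variable {E : Type*} [NormedAddCommGroup E] [InnerProductSpace ℝ E]

def IsStronglyMonotone (α : ℝ) (S : Set (E × E)) : Prop :=
  ∀ p ∈ S, ∀ q ∈ S, α * ‖p.1 - q.1‖ ^ 2 ≤ ⟪p.2 - q.2, p.1 - q.1⟫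

theorem mul_norm_le_of_mul_norm_sq_le_inner {c : ℝ} {a w : E} (h : c * ‖a‖ ^ 2 ≤ ⟪w, a⟫) :
    c * ‖a‖ ≤ ‖w‖ := by
  rcases (norm_nonneg a).eq_or_lt with ha | ha
  · rw [← ha, mul_zero]
    exact norm_nonneg w
  · refine le_of_mul_le_mul_right ?_ ha
    calc c * ‖a‖ * ‖a‖ = c * ‖a‖ ^ 2 := by ring
      _ ≤ ⟪w, a⟫ := h
      _ ≤ ‖w‖ * ‖a‖ := real_inner_le_norm w a

/-- The resolvent `(I + S)⁻¹` of an `α`-strongly monotone `S` is `1/(1+α)`-Lipschitz. -/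
theorem IsStronglyMonotone.norm_sub_le {α : ℝ} {S : Set (E × E)} (hS : IsStronglyMonotone α S)
    (hα : 0 < 1 + α) {a₁ a₂ w₁ w₂ : E} (h₁ : (a₁, w₁ - a₁) ∈ S) (h₂ : (a₂, w₂ - a₂) ∈ S) :
    ‖a₁ - a₂‖ ≤ 1 / (1 + α) * ‖w₁ - w₂‖ := by
  have hmono := hS _ h₁ _ h₂
  have hsplit : ⟪(w₁ - a₁) - (w₂ - a₂), a₁ - a₂⟫ = ⟪w₁ - w₂, a₁ - a₂⟫ - ‖a₁ - a₂‖ ^ 2 := by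
    rw [show (w₁ - a₁) - (w₂ - a₂) = (w₁ - w₂) - (a₁ - a₂) by abel, inner_sub_left,
      real_inner_self_eq_norm_sq]
  have hbound : (1 + α) * ‖a₁ - a₂‖ ≤ ‖w₁ - w₂‖ :=
    mul_norm_le_of_mul_norm_sq_le_inner (by simp only at hmono; linarith)
  rw [one_div_mul_eq_div, le_div_iff₀ hα]
  linarith

end StronglyMonotone

section ParallelComposition

variable {H D : Type*} [NormedAddCommGroup H] [InnerProductSpace ℝ H] [CompleteSpace H]
  [NormedAddCommGroup D] [InnerProductSpace ℝ D] [CompleteSpace D]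

/-- The graph of the parallel composition `C* ▷ A = (C* A⁻¹ C)⁻¹`. -/
def adjointParallelComp (C : D →L[ℝ] H) (A : Set (H × H)) : Set (D × D) :=
  {p | ∃ x : H, (x, C p.2) ∈ A ∧ p.1 = adjoint C x}

theorem inner_apply_adjoint_apply (C : D →L[ℝ] H) (x y : H) :
    ⟪C (adjoint C x), y⟫ = ⟪adjoint C x, adjoint C y⟫ :=
  (adjoint_inner_right C (adjoint C x) y).symm

theorem mul_inner_comp_adjoint_le_iff (C : D →L[ℝ] H) (α : ℝ) (u v u' v' : H) :
    α * ⟪C (adjoint C (u - u')), u - u'⟫ ≤ ⟪C (adjoint C (v - v')), u - u'⟫ ↔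
      α * ‖adjoint C u - adjoint C u'‖ ^ 2 ≤
        ⟪adjoint C v - adjoint C v', adjoint C u - adjoint C u'⟫ := by
  rw [inner_apply_adjoint_apply, inner_apply_adjoint_apply, real_inner_self_eq_norm_sq,
    map_sub, map_sub]

theorem adjoint_mem_adjointParallelComp {C : D →L[ℝ] H} {A : Set (H × H)} {u v : H}
    (h : (u, C (adjoint C v)) ∈ A) : (adjoint C u, adjoint C v) ∈ adjointParallelComp C A :=
  ⟨u, h, rfl⟩

theorem exists_of_mem_adjointParallelComp {C : D →L[ℝ] H} (hC : Function.Surjective (adjoint C))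
    {A : Set (H × H)} {p : D × D} (hp : p ∈ adjointParallelComp C A) :
    ∃ u v : H, (u, C (adjoint C v)) ∈ A ∧ p = (adjoint C u, adjoint C v) := by
  obtain ⟨u, hu, hp₁⟩ := hp
  obtain ⟨v, hv⟩ := hC p.2
  exact ⟨u, v, hv ▸ hu, Prod.ext hp₁ hv.symm⟩

theorem isStronglyMonotone_adjointParallelComp_iff {C : D →L[ℝ] H}
    (hC : Function.Surjective (adjoint C)) (A : Set (H × H)) (α : ℝ) :
    (∀ u v u' v' : H, (u, C (adjoint C v)) ∈ A → (u', C (adjoint C v')) ∈ A →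
        α * ⟪C (adjoint C (u - u')), u - u'⟫ ≤ ⟪C (adjoint C (v - v')), u - u'⟫) ↔
      IsStronglyMonotone α (adjointParallelComp C A) := by
  constructor
  · intro h p hp q hq
    obtain ⟨u, v, hu, rfl⟩ := exists_of_mem_adjointParallelComp hC hp
    obtain ⟨u', v', hu', rfl⟩ := exists_of_mem_adjointParallelComp hC hq
    exact (mul_inner_comp_adjoint_le_iff C α u v u' v').1 (h u v u' v' hu hu')
  · intro h u v u' v' hu hu'
    exact (mul_inner_comp_adjoint_le_iff C α u v u' v').2
      (h _ (adjoint_mem_adjointParallelComp hu) _ (adjoint_mem_adjointParallelComp hu'))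

/-- If `J = (C C* + A)⁻¹`, then `w ↦ C* J (C w)` is the resolvent of `C* ▷ A`. -/
theorem resolvent_mem_adjointParallelComp {C : D →L[ℝ] H} {A : Set (H × H)} {J : H → H}
    (hJ : ∀ v : H, (J v, v - C (adjoint C (J v))) ∈ A) (w : D) :
    (adjoint C (J (C w)), w - adjoint C (J (C w))) ∈ adjointParallelComp C A :=
  ⟨J (C w), by simpa only [map_sub] using hJ (C w), rfl⟩

end ParallelComposition

theorem stmt15_general {H D : Type} [NormedAddCommGroup H] [InnerProductSpace ℝ H] [CompleteSpace H]
    [NormedAddCommGroup D] [InnerProductSpace ℝ D] [CompleteSpace D]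
    (A : Set (H × H)) (M : H →L[ℝ] H) (C : D →L[ℝ] H) (α : ℝ)
    (hCsurj : Function.Surjective (ContinuousLinearMap.adjoint C))
    (hM : M = C ∘L (ContinuousLinearMap.adjoint C))
    -- `J = (M+A)⁻¹`, single-valued with full domain (admissibility)
    (J : H → H)
    (hJ : ∀ v : H, (J v, v - M (J v)) ∈ A)
    -- the graph of `C* ▷ A = (C* A⁻¹ C)⁻¹`
    (CA : Set (D × D))
    (hCA : CA = {p : D × D | ∃ x : H, (x, C p.2) ∈ A ∧
        p.1 = (ContinuousLinearMap.adjoint C) x}) :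
    ((∀ u v u' v' : H, (u, M v) ∈ A → (u', M v') ∈ A →
        α * (inner ℝ (M (u - u')) (u - u') : ℝ) ≤ (inner ℝ (M (v - v')) (u - u') : ℝ)) ↔
      (∀ p ∈ CA, ∀ q ∈ CA,
        α * ‖p.1 - q.1‖ ^ 2 ≤ (inner ℝ (p.2 - q.2) (p.1 - q.1) : ℝ))) ∧
    (0 < α →
      (∀ u v u' v' : H, (u, M v) ∈ A → (u', M v') ∈ A →
        α * (inner ℝ (M (u - u')) (u - u') : ℝ) ≤ (inner ℝ (M (v - v')) (u - u') : ℝ)) →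
      ∀ w₁ w₂ : D,
        ‖(ContinuousLinearMap.adjoint C) (J (C w₁))
            - (ContinuousLinearMap.adjoint C) (J (C w₂))‖
          ≤ (1 / (1 + α)) * ‖w₁ - w₂‖) := by
  subst hM hCA
  have hiff := isStronglyMonotone_adjointParallelComp_iff hCsurj A α
  refine ⟨hiff, fun hα hmono w₁ w₂ => ?_⟩
  exact (hiff.1 hmono).norm_sub_le (by linarith)
    (resolvent_mem_adjointParallelComp hJ w₁) (resolvent_mem_adjointParallelComp hJ w₂)

/-- `M⁻¹A` is `M`-`α`-strongly monotone iff `C* ▷ A` is `α`-strongly monotone; and in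
that case (with `α > 0`) the resolvent `T̃ = (I + C* ▷ A)⁻¹` is a `1/(1+α)`-contraction. -/
theorem stmt15 {H D : Type} [NormedAddCommGroup H] [InnerProductSpace ℝ H] [CompleteSpace H]
    [NormedAddCommGroup D] [InnerProductSpace ℝ D] [CompleteSpace D]
    (A : Set (H × H)) (M : H →L[ℝ] H) (C : D →L[ℝ] H) (α : ℝ)
    (hC : Function.Injective C)
    (hCsurj : Function.Surjective (ContinuousLinearMap.adjoint C))
    (hM : M = C ∘L (ContinuousLinearMap.adjoint C))
    -- `J = (M+A)⁻¹`, single-valued with full domain (admissibility)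
    (J : H → H)
    (hJ : ∀ v : H, (J v, v - M (J v)) ∈ A)
    (hJuniq : ∀ v w : H, (w, v - M w) ∈ A → w = J v)
    -- the graph of `C* ▷ A = (C* A⁻¹ C)⁻¹`
    (CA : Set (D × D))
    (hCA : CA = {p : D × D | ∃ x : H, (x, C p.2) ∈ A ∧
        p.1 = (ContinuousLinearMap.adjoint C) x}) :
    ((∀ u v u' v' : H, (u, M v) ∈ A → (u', M v') ∈ A →
        α * (inner ℝ (M (u - u')) (u - u') : ℝ) ≤ (inner ℝ (M (v - v')) (u - u') : ℝ)) ↔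
      (∀ p ∈ CA, ∀ q ∈ CA,
        α * ‖p.1 - q.1‖ ^ 2 ≤ (inner ℝ (p.2 - q.2) (p.1 - q.1) : ℝ))) ∧
    (0 < α →
      (∀ u v u' v' : H, (u, M v) ∈ A → (u', M v') ∈ A →
        α * (inner ℝ (M (u - u')) (u - u') : ℝ) ≤ (inner ℝ (M (v - v')) (u - u') : ℝ)) →
      ∀ w₁ w₂ : D,
        ‖(ContinuousLinearMap.adjoint C) (J (C w₁))
            - (ContinuousLinearMap.adjoint C) (J (C w₂))‖
          ≤ (1 / (1 + α)) * ‖w₁ - w₂‖) :=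
  stmt15_general A M C α hCsurj hM J hJ CA hCA
end

section
/- If A : H → 2^H is α‖C‖²-strongly monotone (with α > 0) and zer A ≠ ∅, where M = C C* is an admissible preconditioner for A, then the reduced resolvent T̃ = (I + C* ▷ A)⁻¹ is a contraction with factor 1/(1+α). -/
/-!
With `z = C* (u₁ - u₂)` for `uᵢ = J (C wᵢ)`, the pairs `(uᵢ, C wᵢ - C C* uᵢ)` lie in `A`, and the
inner product in the monotonicity inequality for them is `⟪w₁ - w₂, z⟫ - ‖z‖²`. Strong monotonicity together with `‖z‖ ≤ ‖C‖ ‖u₁ - u₂‖`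
gives `(1 + α) ‖z‖² ≤ ⟪w₁ - w₂, z⟫ ≤ ‖w₁ - w₂‖ ‖z‖`.
-/

open ContinuousLinearMap

theorem norm_le_of_mul_norm_sq_le_inner {E : Type*} [NormedAddCommGroup E]
    [InnerProductSpace ℝ E] {c : ℝ} (hc : 0 < c) {w z : E}
    (h : c * ‖z‖ ^ 2 ≤ inner ℝ w z) : ‖z‖ ≤ 1 / c * ‖w‖ := by
  have hle : c * ‖z‖ ^ 2 ≤ ‖w‖ * ‖z‖ := h.trans (real_inner_le_norm w z)
  rcases (norm_nonneg z).eq_or_lt with hz | hz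
  · rw [← hz]
    positivity
  · rw [div_mul_eq_mul_div, le_div_iff₀ hc]
    nlinarith

section Adjoint

variable {H D : Type*} [NormedAddCommGroup H] [InnerProductSpace ℝ H] [CompleteSpace H]
  [NormedAddCommGroup D] [InnerProductSpace ℝ D] [CompleteSpace D]

theorem inner_sub_apply_adjoint (C : D →L[ℝ] H) (w : D) (u : H) :
    inner ℝ (C w - C (adjoint C u)) u = inner ℝ w (adjoint C u) - ‖adjoint C u‖ ^ 2 := by
  rw [inner_sub_left, ← adjoint_inner_right, ← adjoint_inner_right,
    real_inner_self_eq_norm_sq]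

theorem norm_adjoint_apply_sq_le (C : D →L[ℝ] H) (u : H) :
    ‖adjoint C u‖ ^ 2 ≤ ‖C‖ ^ 2 * ‖u‖ ^ 2 := by
  rw [← mul_pow, ← LinearIsometryEquiv.norm_map adjoint C]
  gcongr
  exact (adjoint C).le_opNorm u

theorem norm_adjoint_sub_le_of_strongly_monotone (A : Set (H × H)) (C : D →L[ℝ] H)
    {α : ℝ} (hα : 0 ≤ α)
    (hstrong : ∀ p ∈ A, ∀ q ∈ A,
        α * ‖C‖ ^ 2 * ‖p.1 - q.1‖ ^ 2 ≤ (inner ℝ (p.2 - q.2) (p.1 - q.1) : ℝ))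
    {u₁ u₂ : H} {w₁ w₂ : D}
    (h₁ : (u₁, C w₁ - C (adjoint C u₁)) ∈ A) (h₂ : (u₂, C w₂ - C (adjoint C u₂)) ∈ A) :
    ‖adjoint C u₁ - adjoint C u₂‖ ≤ 1 / (1 + α) * ‖w₁ - w₂‖ := by
  have hmono := hstrong _ h₁ _ h₂
  have hpair : (C w₁ - C (adjoint C u₁)) - (C w₂ - C (adjoint C u₂))
      = C (w₁ - w₂) - C (adjoint C (u₁ - u₂)) := by
    simp only [map_sub]
    abel
  rw [hpair, inner_sub_apply_adjoint] at hmono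
  have hnorm := mul_le_mul_of_nonneg_left (norm_adjoint_apply_sq_le C (u₁ - u₂)) hα
  rw [← map_sub]
  apply norm_le_of_mul_norm_sq_le_inner (by linarith)
  linarith

end Adjoint

theorem stmt16_general {H D : Type} [NormedAddCommGroup H] [InnerProductSpace ℝ H] [CompleteSpace H]
    [NormedAddCommGroup D] [InnerProductSpace ℝ D] [CompleteSpace D]
    (A : Set (H × H)) (M : H →L[ℝ] H) (C : D →L[ℝ] H) (α : ℝ) (hα : 0 < α)
    (hM : M = C ∘L (ContinuousLinearMap.adjoint C))
    -- `J = (M+A)⁻¹`, single-valued with full domain (admissibility)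
    (J : H → H)
    (hJ : ∀ v : H, (J v, v - M (J v)) ∈ A)
    -- `A` is `α‖C‖²`-strongly monotone
    (hstrong : ∀ p ∈ A, ∀ q ∈ A,
        α * ‖C‖ ^ 2 * ‖p.1 - q.1‖ ^ 2 ≤ (inner ℝ (p.2 - q.2) (p.1 - q.1) : ℝ)) :
    ∀ w₁ w₂ : D,
      ‖(ContinuousLinearMap.adjoint C) (J (C w₁))
          - (ContinuousLinearMap.adjoint C) (J (C w₂))‖
        ≤ (1 / (1 + α)) * ‖w₁ - w₂‖ := by
  subst hM
  intro w₁ w₂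
  exact norm_adjoint_sub_le_of_strongly_monotone A C hα.le hstrong (hJ (C w₁)) (hJ (C w₂))

/-- If `A` is `α‖C‖²`-strongly monotone with `α > 0` and has a zero, then the reduced
resolvent `T̃ = C* (M+A)⁻¹ C` is a contraction with factor `1/(1+α)`. -/
theorem stmt16 {H D : Type} [NormedAddCommGroup H] [InnerProductSpace ℝ H] [CompleteSpace H]
    [NormedAddCommGroup D] [InnerProductSpace ℝ D] [CompleteSpace D]
    (A : Set (H × H)) (M : H →L[ℝ] H) (C : D →L[ℝ] H) (α : ℝ) (hα : 0 < α)
    (hC : Function.Injective C)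
    (hCsurj : Function.Surjective (ContinuousLinearMap.adjoint C))
    (hM : M = C ∘L (ContinuousLinearMap.adjoint C))
    -- `J = (M+A)⁻¹`, single-valued with full domain (admissibility)
    (J : H → H)
    (hJ : ∀ v : H, (J v, v - M (J v)) ∈ A)
    (hJuniq : ∀ v w : H, (w, v - M w) ∈ A → w = J v)
    -- `A` is `α‖C‖²`-strongly monotone
    (hstrong : ∀ p ∈ A, ∀ q ∈ A,
        α * ‖C‖ ^ 2 * ‖p.1 - q.1‖ ^ 2 ≤ (inner ℝ (p.2 - q.2) (p.1 - q.1) : ℝ))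
    -- `zer A ≠ ∅`
    (hzer : ∃ x : H, (x, (0 : H)) ∈ A) :
    ∀ w₁ w₂ : D,
      ‖(ContinuousLinearMap.adjoint C) (J (C w₁))
          - (ContinuousLinearMap.adjoint C) (J (C w₂))‖
        ≤ (1 / (1 + α)) * ‖w₁ - w₂‖ :=
  stmt16_general A M C α hα hM J hJ hstrong
end

section
/- Let A and B be maximal monotone operators on a real Hilbert space H and σ > 0. Define the operator 𝒜 on H² by 𝒜(x,y) = (σA x + y) × (−x + (σB)⁻¹ y) and M(x,y) = (x−y, −x+y). Suppose A is μ-strongly monotone and B is 1/β-cocoercive. Then for all (u,ξ), (u',ξ') in the graph of 𝒜 with ξ, ξ' ∈ Im M, one has ⟨ξ−ξ', u−u'⟩ ≥ α‖u−u'‖_M² with α = min{σμ/2, 1/(2σβ)}. -/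
/-!
Write `P = x - x'`, `Q = y - y'`, `D = a - a'`. Since `ξ = (ξ₁, -ξ₁)`, the pairing
`⟨ξ - ξ', u - u'⟩` equals `⟨σ D + Q, P - Q⟩`, and `b - b' = P - Q - σ D`. Strong monotonicity of
`A` gives `σ⟨D, P⟩ ≥ σμ‖P‖²`, and cocoercivity of `B` at the points `(b, y/σ)`, `(b', y'/σ)` gives
`⟨Q, P - Q - σ D⟩ ≥ ‖Q‖²/(σβ)`. Adding the two yields
`⟨ξ - ξ', u - u'⟩ ≥ σμ‖P‖² + ‖Q‖²/(σβ) ≥ α (2‖P‖² + 2‖Q‖²) ≥ α ‖P - Q‖²`.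
-/

open RealInnerProductSpace

lemma min_half_mul_norm_sub_sq_le {E : Type*} [SeminormedAddCommGroup E] {a b : ℝ}
    (ha : 0 ≤ a) (hb : 0 ≤ b) (x y : E) :
    min (a / 2) (b / 2) * ‖x - y‖ ^ 2 ≤ a * ‖x‖ ^ 2 + b * ‖y‖ ^ 2 := by
  have hsub : ‖x - y‖ ^ 2 ≤ 2 * ‖x‖ ^ 2 + 2 * ‖y‖ ^ 2 := by
    nlinarith [norm_sub_le x y, norm_nonneg (x - y), sq_nonneg (‖x‖ - ‖y‖)]
  have hm : 0 ≤ min (a / 2) (b / 2) := le_min (by linarith) (by linarith)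
  calc min (a / 2) (b / 2) * ‖x - y‖ ^ 2
      ≤ min (a / 2) (b / 2) * (2 * ‖x‖ ^ 2 + 2 * ‖y‖ ^ 2) := by gcongr
    _ ≤ a * ‖x‖ ^ 2 + b * ‖y‖ ^ 2 := by
      nlinarith [min_le_left (a / 2) (b / 2), min_le_right (a / 2) (b / 2),
        sq_nonneg ‖x‖, sq_nonneg ‖y‖]

section InnerProductSpace

variable {H : Type*} [NormedAddCommGroup H] [InnerProductSpace ℝ H]

lemma mul_norm_sq_le_inner_of_smul {c t : ℝ} (ht : 0 < t) {Q R : H}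
    (h : c * ‖t • Q‖ ^ 2 ≤ ⟪t • Q, R⟫) : c * t * ‖Q‖ ^ 2 ≤ ⟪Q, R⟫ := by
  rw [norm_smul, Real.norm_of_nonneg ht.le, real_inner_smul_left] at h
  nlinarith

lemma inner_sub_add_inner_neg_sub (ξ ξ' x x' y y' : H) :
    ⟪ξ - ξ', x - x'⟫ + ⟪-ξ - -ξ', y - y'⟫ = ⟪ξ - ξ', (x - y) - (x' - y')⟫ := by
  rw [neg_sub_neg, ← neg_sub ξ ξ', inner_neg_left, ← sub_eq_add_neg, ← inner_sub_right]
  congr 1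
  abel

lemma add_le_inner_smul_add_sub {σ μ κ : ℝ} (hσ : 0 ≤ σ) {D P Q : H}
    (hA : μ * ‖P‖ ^ 2 ≤ ⟪D, P⟫) (hB : κ * ‖Q‖ ^ 2 ≤ ⟪Q, P - Q - σ • D⟫) :
    σ * μ * ‖P‖ ^ 2 + κ * ‖Q‖ ^ 2 ≤ ⟪σ • D + Q, P - Q⟫ := by
  simp only [inner_sub_right, real_inner_smul_right, real_inner_comm D Q] at hB
  simp only [inner_add_left, real_inner_smul_left, inner_sub_right]
  nlinarith [mul_le_mul_of_nonneg_left hA hσ]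

end InnerProductSpace

theorem stmt17_general {H : Type} [NormedAddCommGroup H] [InnerProductSpace ℝ H]
    (A B : Set (H × H)) (σ μ β : ℝ) (hσ : 0 < σ) (hμ : 0 < μ) (hβ : 0 < β)
    -- `A` `μ`-strongly monotone
    (hAstrong : ∀ p ∈ A, ∀ q ∈ A,
        μ * ‖p.1 - q.1‖ ^ 2 ≤ (inner ℝ (p.2 - q.2) (p.1 - q.1) : ℝ))
    -- `B` `1/β`-cocoercive
    (hBcoco : ∀ p ∈ B, ∀ q ∈ B,
        (1 / β) * ‖p.2 - q.2‖ ^ 2 ≤ (inner ℝ (p.2 - q.2) (p.1 - q.1) : ℝ)) :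
    ∀ x y ξ₁ ξ₂ x' y' ξ₁' ξ₂' a b a' b' : H,
      -- `(u, ξ) ∈ 𝒜` with `ξ ∈ Im M`
      (x, a) ∈ A → (b, σ⁻¹ • y) ∈ B → ξ₁ = σ • a + y → ξ₂ = -x + b → ξ₂ = -ξ₁ →
      (x', a') ∈ A → (b', σ⁻¹ • y') ∈ B → ξ₁' = σ • a' + y' → ξ₂' = -x' + b' → ξ₂' = -ξ₁' →
      min (σ * μ / 2) (1 / (2 * σ * β)) * ‖(x - y) - (x' - y')‖ ^ 2
        ≤ (inner ℝ (ξ₁ - ξ₁') (x - x') : ℝ) + (inner ℝ (ξ₂ - ξ₂') (y - y') : ℝ) := by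
  intro x y ξ₁ ξ₂ x' y' ξ₁' ξ₂' a b a' b' hxa hby rfl hb rfl hxa' hby' rfl hb' rfl
  have hA : μ * ‖x - x'‖ ^ 2 ≤ ⟪a - a', x - x'⟫ := hAstrong _ hxa _ hxa'
  have hbb' : b - b' = (x - x') - (y - y') - σ • (a - a') := by
    have hb₀ : b = x - (σ • a + y) := by rw [sub_eq_add_neg, hb]; abel
    have hb₀' : b' = x' - (σ • a' + y') := by rw [sub_eq_add_neg, hb']; abel
    rw [hb₀, hb₀', smul_sub]
    abel
  have hB : 1 / β * σ⁻¹ * ‖y - y'‖ ^ 2 ≤ ⟪y - y', (x - x') - (y - y') - σ • (a - a')⟫ := by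
    rw [← hbb']
    refine mul_norm_sq_le_inner_of_smul (inv_pos.2 hσ) ?_
    simpa only [smul_sub] using hBcoco _ hby _ hby'
  have hξ : σ • a + y - (σ • a' + y') = σ • (a - a') + (y - y') := by
    rw [smul_sub]; abel
  have hα : 1 / (2 * σ * β) = 1 / β * σ⁻¹ / 2 := by field_simp
  rw [inner_sub_add_inner_neg_sub, hξ, hα, sub_sub_sub_comm]
  exact (min_half_mul_norm_sub_sq_le (by positivity) (by positivity) _ _).trans
    (add_le_inner_smul_add_sub hσ.le hA hB)

/-- DRS strong monotonicity estimate (case 1): if `A` is `μ`-strongly monotone and `B` is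
`1/β`-cocoercive, then on the graph of `𝒜` restricted to outputs in `Im M` one has
`⟨ξ−ξ', u−u'⟩ ≥ α ‖u−u'‖_M²` with `α = min {σμ/2, 1/(2σβ)}`. -/
theorem stmt17 {H : Type} [NormedAddCommGroup H] [InnerProductSpace ℝ H] [CompleteSpace H]
    (A B : Set (H × H)) (σ μ β : ℝ) (hσ : 0 < σ) (hμ : 0 < μ) (hβ : 0 < β)
    -- `A`, `B` maximal monotone
    (hAmono : ∀ p ∈ A, ∀ q ∈ A, 0 ≤ (inner ℝ (p.2 - q.2) (p.1 - q.1) : ℝ))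
    (hAmax : ∀ p : H × H, (∀ q ∈ A, 0 ≤ (inner ℝ (p.2 - q.2) (p.1 - q.1) : ℝ)) → p ∈ A)
    (hBmono : ∀ p ∈ B, ∀ q ∈ B, 0 ≤ (inner ℝ (p.2 - q.2) (p.1 - q.1) : ℝ))
    (hBmax : ∀ p : H × H, (∀ q ∈ B, 0 ≤ (inner ℝ (p.2 - q.2) (p.1 - q.1) : ℝ)) → p ∈ B)
    -- `A` `μ`-strongly monotone
    (hAstrong : ∀ p ∈ A, ∀ q ∈ A,
        μ * ‖p.1 - q.1‖ ^ 2 ≤ (inner ℝ (p.2 - q.2) (p.1 - q.1) : ℝ))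
    -- `B` `1/β`-cocoercive
    (hBcoco : ∀ p ∈ B, ∀ q ∈ B,
        (1 / β) * ‖p.2 - q.2‖ ^ 2 ≤ (inner ℝ (p.2 - q.2) (p.1 - q.1) : ℝ)) :
    ∀ x y ξ₁ ξ₂ x' y' ξ₁' ξ₂' a b a' b' : H,
      -- `(u, ξ) ∈ 𝒜` with `ξ ∈ Im M`
      (x, a) ∈ A → (b, σ⁻¹ • y) ∈ B → ξ₁ = σ • a + y → ξ₂ = -x + b → ξ₂ = -ξ₁ →
      (x', a') ∈ A → (b', σ⁻¹ • y') ∈ B → ξ₁' = σ • a' + y' → ξ₂' = -x' + b' → ξ₂' = -ξ₁' →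
      min (σ * μ / 2) (1 / (2 * σ * β)) * ‖(x - y) - (x' - y')‖ ^ 2
        ≤ (inner ℝ (ξ₁ - ξ₁') (x - x') : ℝ) + (inner ℝ (ξ₂ - ξ₂') (y - y') : ℝ) :=
  stmt17_general A B σ μ β hσ hμ hβ hAstrong hBcoco
end

section
/- Let T : H → H satisfy ‖T u' − T u''‖ ≤ C₁‖u' − u''‖_M for a continuous seminorm ‖·‖_M, and suppose the iteration u^{k+1} = u^k + λ_k(T u^k − u^k) with λ_k ∈ [ε, 2−ε] satisfies Σ_k ‖u^{k+1} − u^k‖_M² < ∞. Then the quantities φ_k := ‖T u^k − u^k‖² satisfy a recursion φ_{k+1} ≤ η φ_k + C‖u^{k+1} − u^k‖_M² for some η < 1 and constant C, and consequently φ_k → 0, i.e., ‖T u^k − u^k‖ → 0 strongly. -/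
/-!
The residual `r k = T (u k) - u k` of the relaxed step satisfies
`r (k + 1) = (T (u (k + 1)) - T (u k)) + (1 - λ_k) r k`, and `|1 - λ_k| ≤ 1 - ε`. The first term is
controlled by the Lipschitz bound in the `M`-seminorm, and Young's inequality with a small weight
`s` gives `‖r (k + 1)‖² ≤ (1 + s)(1 - ε)² ‖r k‖² + (1 + s⁻¹) C₁² ‖u (k + 1) - u k‖_M²`, where
`(1 + s)(1 - ε)² < 1`. Summing such a contracting recursion with summable perturbation shows
that `‖r k‖²` is itself summable, hence tends to zero.
-/

open Filter Finset

theorem tendsto_zero_of_le_mul_add_of_summable {φ α : ℕ → ℝ} {η : ℝ} (hη₀ : 0 ≤ η) (hη₁ : η < 1)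
    (hφ : ∀ k, 0 ≤ φ k) (hα : ∀ k, 0 ≤ α k) (hαsum : Summable α)
    (hrec : ∀ k, φ (k + 1) ≤ η * φ k + α k) :
    Tendsto φ atTop (nhds 0) := by
  have hpartial : ∀ n, ∑ i ∈ range n, φ (i + 1) ≤ (η * φ 0 + ∑' k, α k) / (1 - η) := by
    intro n
    have hshift : ∑ i ∈ range n, φ i ≤ φ 0 + ∑ i ∈ range n, φ (i + 1) := by
      have := sum_range_succ' φ n
      have := sum_range_succ φ n
      linarith [hφ n]
    have hstep : ∑ i ∈ range n, φ (i + 1) ≤ η * ∑ i ∈ range n, φ i + ∑ i ∈ range n, α i := by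
      rw [mul_sum, ← sum_add_distrib]
      exact sum_le_sum fun k _ => hrec k
    rw [le_div_iff₀ (by linarith)]
    nlinarith [hαsum.sum_le_tsum (range n) fun k _ => hα k]
  have hsum : Summable fun i => φ (i + 1) := summable_of_sum_range_le (fun i => hφ _) hpartial
  exact (tendsto_add_atTop_iff_nat 1).mp hsum.tendsto_atTop_zero

theorem add_sq_le_one_add_mul_sq_add {x y s : ℝ} (hs : 0 < s) :
    (x + y) ^ 2 ≤ (1 + s) * x ^ 2 + (1 + s⁻¹) * y ^ 2 := by
  have : s * s⁻¹ = 1 := mul_inv_cancel₀ hs.ne'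
  nlinarith [sq_nonneg (s * x - y), sq_nonneg (x - y), inv_pos.2 hs]

theorem exists_pos_one_add_mul_lt_one {q : ℝ} (hq : q < 1) : ∃ s > 0, (1 + s) * q < 1 :=
  ⟨(1 - q) / 2, by linarith, by nlinarith⟩

theorem abs_one_sub_le_of_mem_Icc {ε t : ℝ} (ht : t ∈ Set.Icc ε (2 - ε)) : |1 - t| ≤ 1 - ε :=
  abs_le.2 ⟨by linarith [ht.2], by linarith [ht.1]⟩

theorem relaxed_step_residual {E : Type*} [AddCommGroup E] [Module ℝ E] (T : E → E) (t : ℝ) (u : E) :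
    T (u + t • (T u - u)) - (u + t • (T u - u))
      = (T (u + t • (T u - u)) - T u) + (1 - t) • (T u - u) := by
  module

section RelaxedIteration

variable {H : Type*} [NormedAddCommGroup H] [InnerProductSpace ℝ H] {M : H →L[ℝ] H} {T : H → H}
  {C₁ : ℝ}

theorem norm_relaxed_step_residual_le
    (hTLip : ∀ u u' : H, ‖T u - T u'‖ ≤ C₁ * Real.sqrt (inner ℝ (M (u - u')) (u - u')))
    {ε t : ℝ} (ht : t ∈ Set.Icc ε (2 - ε)) (u : H) :
    ‖T (u + t • (T u - u)) - (u + t • (T u - u))‖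
      ≤ C₁ * Real.sqrt (inner ℝ (M (t • (T u - u))) (t • (T u - u))) + (1 - ε) * ‖T u - u‖ := by
  rw [relaxed_step_residual]
  refine (norm_add_le _ _).trans (add_le_add ?_ ?_)
  · simpa using hTLip (u + t • (T u - u)) u
  · rw [norm_smul, Real.norm_eq_abs]
    exact mul_le_mul_of_nonneg_right (abs_one_sub_le_of_mem_Icc ht) (norm_nonneg _)

theorem sq_norm_relaxed_step_residual_le (hMpos : ∀ x : H, 0 ≤ (inner ℝ (M x) x : ℝ))
    (hTLip : ∀ u u' : H, ‖T u - T u'‖ ≤ C₁ * Real.sqrt (inner ℝ (M (u - u')) (u - u')))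
    {ε t s : ℝ} (ht : t ∈ Set.Icc ε (2 - ε)) (hs : 0 < s) (u : H) :
    ‖T (u + t • (T u - u)) - (u + t • (T u - u))‖ ^ 2
      ≤ (1 + s) * (1 - ε) ^ 2 * ‖T u - u‖ ^ 2
        + (1 + s⁻¹) * C₁ ^ 2 * inner ℝ (M (t • (T u - u))) (t • (T u - u)) := by
  set m : ℝ := inner ℝ (M (t • (T u - u))) (t • (T u - u))
  calc _ ≤ ((1 - ε) * ‖T u - u‖ + C₁ * Real.sqrt m) ^ 2 := by
        rw [add_comm ((1 - ε) * _)]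
        exact pow_le_pow_left₀ (norm_nonneg _) (norm_relaxed_step_residual_le hTLip ht u) 2
    _ ≤ (1 + s) * ((1 - ε) * ‖T u - u‖) ^ 2 + (1 + s⁻¹) * (C₁ * Real.sqrt m) ^ 2 :=
        add_sq_le_one_add_mul_sq_add hs
    _ = _ := by rw [mul_pow, mul_pow, Real.sq_sqrt (hMpos _)]; ring

end RelaxedIteration

theorem stmt18_general {H : Type} [NormedAddCommGroup H] [InnerProductSpace ℝ H]
    (M : H →L[ℝ] H) (T : H → H) (C₁ ε : ℝ) (hε : 0 < ε)
    (hMpos : ∀ x : H, 0 ≤ (inner ℝ (M x) x : ℝ))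
    (hTLip : ∀ u u' : H, ‖T u - T u'‖ ≤ C₁ * Real.sqrt (inner ℝ (M (u - u')) (u - u')))
    (lam : ℕ → ℝ) (hlam : ∀ k, lam k ∈ Set.Icc ε (2 - ε))
    (u : ℕ → H) (hiter : ∀ k, u (k + 1) = u k + lam k • (T (u k) - u k))
    (hsum : Summable (fun k => (inner ℝ (M (u (k + 1) - u k)) (u (k + 1) - u k) : ℝ))) :
    (∃ η C : ℝ, η < 1 ∧ ∀ k : ℕ,
        ‖T (u (k + 1)) - u (k + 1)‖ ^ 2
          ≤ η * ‖T (u k) - u k‖ ^ 2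
            + C * (inner ℝ (M (u (k + 1) - u k)) (u (k + 1) - u k) : ℝ)) ∧
    Tendsto (fun k => ‖T (u k) - u k‖) atTop (nhds 0) := by
  have hε₁ : ε ≤ 1 := by linarith [(hlam 0).1, (hlam 0).2]
  obtain ⟨s, hs, hη₁⟩ := exists_pos_one_add_mul_lt_one (q := (1 - ε) ^ 2) (by nlinarith)
  have hrec : ∀ k, ‖T (u (k + 1)) - u (k + 1)‖ ^ 2
      ≤ (1 + s) * (1 - ε) ^ 2 * ‖T (u k) - u k‖ ^ 2
        + (1 + s⁻¹) * C₁ ^ 2 * inner ℝ (M (u (k + 1) - u k)) (u (k + 1) - u k) := by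
    intro k
    have hstep : u (k + 1) - u k = lam k • (T (u k) - u k) := by rw [hiter k]; abel
    rw [hstep, hiter k]
    exact sq_norm_relaxed_step_residual_le hMpos hTLip (hlam k) hs (u k)
  refine ⟨⟨_, _, hη₁, hrec⟩, ?_⟩
  have hsq : Tendsto (fun k => ‖T (u k) - u k‖ ^ 2) atTop (nhds 0) :=
    tendsto_zero_of_le_mul_add_of_summable (by positivity) hη₁ (fun _ => sq_nonneg _)
      (fun _ => mul_nonneg (by positivity) (hMpos _)) (hsum.mul_left _) hrec
  simpa [Real.sqrt_sq (norm_nonneg _)] using hsq.sqrt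

/-- If `T` is Lipschitz w.r.t. the `M`-seminorm, the iterates satisfy the recursion
`φ_{k+1} ≤ η φ_k + C ‖u^{k+1} − u^k‖_M²` with `η < 1`, and `‖T u^k − u^k‖ → 0`. -/
theorem stmt18 {H : Type} [NormedAddCommGroup H] [InnerProductSpace ℝ H] [CompleteSpace H]
    (M : H →L[ℝ] H) (T : H → H) (C₁ ε : ℝ) (hε : 0 < ε)
    (hMsa : ∀ x y : H, (inner ℝ (M x) y : ℝ) = inner ℝ x (M y))
    (hMpos : ∀ x : H, 0 ≤ (inner ℝ (M x) x : ℝ))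
    (hTLip : ∀ u u' : H, ‖T u - T u'‖ ≤ C₁ * Real.sqrt (inner ℝ (M (u - u')) (u - u')))
    (lam : ℕ → ℝ) (hlam : ∀ k, lam k ∈ Set.Icc ε (2 - ε))
    (u : ℕ → H) (hiter : ∀ k, u (k + 1) = u k + lam k • (T (u k) - u k))
    (hsum : Summable (fun k => (inner ℝ (M (u (k + 1) - u k)) (u (k + 1) - u k) : ℝ))) :
    (∃ η C : ℝ, η < 1 ∧ ∀ k : ℕ,
        ‖T (u (k + 1)) - u (k + 1)‖ ^ 2
          ≤ η * ‖T (u k) - u k‖ ^ 2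
            + C * (inner ℝ (M (u (k + 1) - u k)) (u (k + 1) - u k) : ℝ)) ∧
    Tendsto (fun k => ‖T (u k) - u k‖) atTop (nhds 0) :=
  stmt18_general M T C₁ ε hε hMpos hTLip lam hlam u hiter hsum
end
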